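/- arXiv:2405.13371 — 6 statements merged into one kernel-verified Lean document; each statement's English description precedes it below -/
import Mathlib

section
/- Every finite simple graph G with maximum degree Δ admits a proper edge coloring using at most Δ + 1 colors. -/
/-!
Colour the edges one at a time with `k > Δ` colours, so that every vertex always misses a
colour. To colour an uncoloured edge `x y₀`, grow a Vizing fan `y₀, …, y_m` at `x`: the colour
of `x y_{i+1}` is missing at `y_i`. Let `α` miss `x` and `β` miss `y_m`. If `β` also misses `x`,
rotate the fan (move the colour of `x y_{i+1}` to `x y_i`) and colour `x y_m` with `β`. If `β`
sits on `x w` with `w` outside the fan, extend the fan by `w`. Otherwise `w = y_{j+1}`, so `β`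
misses both `y_j` and `y_m`. In the `α`/`β` subgraph, of maximum degree 2, the three vertices
`x`, `y_j`, `y_m` have degree at most 1, and a connected graph of maximum degree 2 has at most
two such vertices. Hence either the component of `y_j` avoids `x`, or that of `y_m` avoids both
`x` and `y_j`. Swapping `α` and `β` on it makes `α` miss its fan vertex while keeping the fan up
to that vertex intact, and rotating this fan closes it with `α`.
-/

open Finset

namespace SimpleGraph

variable {V : Type*}

/-- A connected graph has at least `|V| - 1` edges, so the total degree deficit
`∑ v, (2 - deg v)` is at most 2. -/
theorem Connected.card_filter_degree_lt_two_le_two [Fintype V] {H : SimpleGraph V}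
    [DecidableRel H.Adj] (hH : H.Connected) (hdeg : ∀ v, H.degree v ≤ 2) :
    #{v | H.degree v < 2} ≤ 2 := by
  classical
  have hedges := hH.card_vert_le_card_edgeSet_add_one
  rw [Nat.card_eq_fintype_card, Nat.card_eq_fintype_card, ← edgeFinset_card] at hedges
  have hsum : ∑ v, H.degree v + #{v | H.degree v < 2} ≤ 2 * Fintype.card V := by
    rw [card_filter, ← sum_add_distrib, ← card_univ, mul_comm, ← smul_eq_mul, ← sum_const]
    exact sum_le_sum fun v _ => by have := hdeg v; split_ifs <;> omega
  have := H.sum_degrees_eq_twice_card_edges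
  omega

theorem card_le_two_of_reachable_of_degree_lt_two [Fintype V] {H : SimpleGraph V}
    [DecidableRel H.Adj] (hdeg : ∀ v, H.degree v ≤ 2) {u : V} {s : Finset V}
    (hs : ∀ v ∈ s, H.Reachable u v ∧ H.degree v < 2) : #s ≤ 2 := by
  classical
  obtain ⟨c, hc⟩ : ∃ c, H.connectedComponentMk u = c := ⟨_, rfl⟩
  have hsupp : ∀ v ∈ s, v ∈ c.supp := fun v hv =>
    (c.mem_supp_iff v).2 (hc ▸ ConnectedComponent.sound (hs v hv).1.symm)
  have hnbr (v : c.supp) : H.neighborSet v ⊆ c.supp := fun w hw =>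
    c.mem_supp_of_adj_mem_supp v.2 hw
  have hdeg' (v : c.supp) : (H.induce c.supp).degree v = H.degree v :=
    degree_induce_of_neighborSet_subset (hnbr v)
  have hconn : (H.induce c.supp).Connected := c.connected_toSimpleGraph
  calc #s = #(s.subtype (· ∈ c.supp)) := by
        rw [card_subtype, filter_true_of_mem hsupp]
    _ ≤ #{v | (H.induce c.supp).degree v < 2} := by
        refine card_le_card fun v hv => ?_
        rw [mem_filter, hdeg']
        exact ⟨mem_univ _, (hs v (mem_subtype.1 hv)).2⟩
    _ ≤ 2 := hconn.card_filter_degree_lt_two_le_two fun v => by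
        rw [hdeg']; exact hdeg v

variable {G : SimpleGraph V} {k : ℕ}

@[ext]
structure PartialEdgeColoring (G : SimpleGraph V) (k : ℕ) where
  color : Sym2 V → Option (Fin k)
  mem_edgeSet {e : Sym2 V} {a : Fin k} : color e = some a → e ∈ G.edgeSet
  eq_of_color_eq {u v w : V} {a : Fin k} :
    color s(u, v) = some a → color s(u, w) = some a → v = w

namespace PartialEdgeColoring

variable (C : PartialEdgeColoring G k)

def domain : Set (Sym2 V) := {e | (C.color e).isSome}

@[simp]
theorem mem_domain {e : Sym2 V} : e ∈ C.domain ↔ (C.color e).isSome := Iff.rfl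

def Free (v : V) (a : Fin k) : Prop := ∀ w, C.color s(v, w) ≠ some a

theorem exists_free {v : V} [Fintype (G.neighborSet v)] (hv : G.degree v < k) :
    ∃ a, C.Free v a := by
  by_contra! hused
  choose w hw using fun a => not_forall_not.1 (hused a)
  have hinj : Function.Injective fun a => (⟨w a, C.mem_edgeSet (hw a)⟩ : G.neighborSet v) :=
    fun a b hab => by
      have hab : w a = w b := congrArg Subtype.val hab
      exact Option.some_injective _ <| (hw a).symm.trans <| by rw [hab]; exact hw b
  have := Fintype.card_le_of_injective _ hinj
  rw [Fintype.card_fin, card_neighborSet_eq_degree] at this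
  omega

structure IsFan (x : V) (f : ℕ → V) (m : ℕ) : Prop where
  adj {i : ℕ} : i ≤ m → G.Adj x (f i)
  injOn : Set.InjOn f (Set.Iic m)
  color_zero : C.color s(x, f 0) = none
  exists_color_succ {i : ℕ} : i < m → ∃ b, C.color s(x, f (i + 1)) = some b ∧ C.Free (f i) b

variable {C} {x : V} {f : ℕ → V} {m : ℕ}

theorem IsFan.ne {i j : ℕ} (hf : C.IsFan x f m) (hi : i ≤ m) (hj : j ≤ m)
    (hij : i ≠ j) : f i ≠ f j :=
  fun h => hij (hf.injOn (Set.mem_Iic.2 hi) (Set.mem_Iic.2 hj) h)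

theorem IsFan.mono {n : ℕ} (hf : C.IsFan x f m) (hn : n ≤ m) : C.IsFan x f n where
  adj hi := hf.adj (hi.trans hn)
  injOn := hf.injOn.mono (Set.Iic_subset_Iic.2 hn)
  color_zero := hf.color_zero
  exists_color_succ hi := hf.exists_color_succ (hi.trans_le hn)

theorem IsFan.snoc {w : V} {b : Fin k} (hf : C.IsFan x f m) (hw : C.color s(x, w) = some b)
    (hb : C.Free (f m) b) (hwf : ∀ i ≤ m, f i ≠ w) :
    C.IsFan x (Function.update f (m + 1) w) (m + 1) where
  adj {i} hi := by
    rcases Nat.lt_or_eq_of_le hi with hi | rfl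
    · rw [Function.update_of_ne (by omega)]
      exact hf.adj (by omega)
    · rw [Function.update_self]
      exact C.mem_edgeSet hw
  injOn i hi j hj h := by
    simp only [Set.mem_Iic] at hi hj
    simp only [Function.update_apply] at h
    split_ifs at h with hi' hj'
    · omega
    · exact absurd h.symm (hwf j (by omega))
    · exact absurd h (hwf i (by omega))
    · exact hf.injOn (Set.mem_Iic.2 (by omega)) (Set.mem_Iic.2 (by omega)) h
  color_zero := by
    rw [Function.update_of_ne (by omega)]
    exact hf.color_zero
  exists_color_succ {i} hi := by
    rw [Function.update_of_ne (show i ≠ m + 1 by omega)]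
    rcases Nat.lt_or_eq_of_le (Nat.le_of_lt_succ hi) with hi | rfl
    · rw [Function.update_of_ne (show i + 1 ≠ m + 1 by omega)]
      exact hf.exists_color_succ hi
    · rw [Function.update_self]
      exact ⟨b, hw, hb⟩

theorem IsFan.lt_card [Fintype V] (hf : C.IsFan x f m) : m < Fintype.card V := by
  have := card_le_card_of_injOn f (s := range (m + 1)) (t := univ) (fun _ _ => mem_univ _)
    fun i hi j hj h => hf.injOn (by simpa [Nat.lt_succ_iff] using hi)
      (by simpa [Nat.lt_succ_iff] using hj) h
  simpa using this

section Recolor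

variable [DecidableEq V]

variable (C) in
def uncolor (e : Sym2 V) : PartialEdgeColoring G k where
  color := Function.update C.color e none
  mem_edgeSet {e'} {a} h := by
    by_cases he : e' = e
    · simp [he] at h
    · exact C.mem_edgeSet (by rwa [Function.update_of_ne he] at h)
  eq_of_color_eq {u v w a} hv hw := by
    rw [Function.update_apply] at hv hw
    split_ifs at hv hw
    exact C.eq_of_color_eq hv hw

variable (C) in
def colorEdge {x y : V} {a : Fin k} (h : G.Adj x y)
    (hx : C.Free x a) (hy : C.Free y a) : PartialEdgeColoring G k where
  color := Function.update C.color s(x, y) (some a)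
  mem_edgeSet {e b} he := by
    by_cases hexy : e = s(x, y)
    · exact hexy ▸ h
    · exact C.mem_edgeSet (by rwa [Function.update_of_ne hexy] at he)
  eq_of_color_eq {u v w b} hv hw := by
    have hu (hu : u ∈ s(x, y)) (z : V) : C.color s(u, z) ≠ some a := by
      rcases Sym2.mem_iff.1 hu with rfl | rfl
      exacts [hx z, hy z]
    rw [Function.update_apply] at hv hw
    split_ifs at hv hw with hev hew hew
    · exact Sym2.congr_right.1 (hev.trans hew.symm)
    · cases Option.some_injective _ hv
      exact absurd hw (hu (hev ▸ Sym2.mem_mk_left u v) w)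
    · cases Option.some_injective _ hw
      exact absurd hv (hu (hew ▸ Sym2.mem_mk_left u w) v)
    · exact C.eq_of_color_eq hv hw

@[simp]
theorem color_uncolor (e : Sym2 V) : (C.uncolor e).color = Function.update C.color e none := rfl

@[simp]
theorem color_colorEdge {x y : V} {a : Fin k} (h : G.Adj x y) (hx : C.Free x a)
    (hy : C.Free y a) :
    (C.colorEdge h hx hy).color = Function.update C.color s(x, y) (some a) := rfl

theorem domain_uncolor (e : Sym2 V) : (C.uncolor e).domain = C.domain \ {e} := by
  ext e'
  by_cases he : e' = e <;> simp [domain, he]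

theorem domain_colorEdge {x y : V} {a : Fin k} (h : G.Adj x y) (hx : C.Free x a)
    (hy : C.Free y a) : (C.colorEdge h hx hy).domain = insert s(x, y) C.domain := by
  ext e
  by_cases he : e = s(x, y) <;> simp [domain, he]

theorem Free.uncolor {v : V} {a : Fin k} (hv : C.Free v a) (e : Sym2 V) :
    (C.uncolor e).Free v a := fun w => by
  rw [color_uncolor, Function.update_apply]
  split_ifs
  exacts [Option.some_ne_none a |>.symm, hv w]

theorem Free.colorEdge {v x y : V} {a b : Fin k} (hv : C.Free v b) (h : G.Adj x y)
    (hx : C.Free x a) (hy : C.Free y a) (hvab : b = a → v ≠ x ∧ v ≠ y) :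
    (C.colorEdge h hx hy).Free v b := fun w => by
  rw [color_colorEdge, Function.update_apply]
  split_ifs with hw
  · rintro ⟨⟩
    obtain ⟨hvx, hvy⟩ := hvab rfl
    rcases Sym2.mem_iff.1 (hw ▸ Sym2.mem_mk_left v w) with h | h
    exacts [hvx h, hvy h]
  · exact hv w

end Recolor

section Kempe

variable (C) in
def kempeGraph (α β : Fin k) : SimpleGraph V where
  Adj u v := C.color s(u, v) = some α ∨ C.color s(u, v) = some β
  symm.symm u v h := by rwa [Sym2.eq_swap]
  loopless.irrefl v h := G.loopless.irrefl v <| by rcases h with h | h <;> exact C.mem_edgeSet h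

variable {α β : Fin k}

theorem degree_kempeGraph_le {v : V} [Fintype ((C.kempeGraph α β).neighborSet v)]
    {t : Finset (Option (Fin k))}
    (ht : ∀ w, (C.kempeGraph α β).Adj v w → C.color s(v, w) ∈ t) :
    (C.kempeGraph α β).degree v ≤ #t := by
  rw [← card_neighborFinset_eq_degree]
  refine card_le_card_of_injOn (fun w => C.color s(v, w)) (fun w hw => ht w (by simpa using hw))
    fun w hw w' hw' h => ?_
  rcases (mem_neighborFinset _ _ _).1 hw with hw | hw <;>
    exact C.eq_of_color_eq hw (by simp_all)

theorem degree_kempeGraph_le_two (v : V) [Fintype ((C.kempeGraph α β).neighborSet v)] :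
    (C.kempeGraph α β).degree v ≤ 2 :=
  (degree_kempeGraph_le (t := {some α, some β}) fun _ h => by simpa [kempeGraph] using h).trans
    card_le_two

theorem degree_kempeGraph_lt_two {v : V} [Fintype ((C.kempeGraph α β).neighborSet v)]
    (hv : C.Free v α ∨ C.Free v β) : (C.kempeGraph α β).degree v < 2 := by
  rcases hv with hv | hv
  · exact (degree_kempeGraph_le (t := {some β}) fun w h => by
      simpa using (show C.color s(v, w) = _ ∨ _ from h).resolve_left (hv w)).trans_lt (by simp)
  · exact (degree_kempeGraph_le (t := {some α}) fun w h => by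
      simpa using (show C.color s(v, w) = _ ∨ _ from h).resolve_right (hv w)).trans_lt (by simp)

open Classical in
variable (C α β) in
/-- Applying the swap to every edge touching the component of `u` is harmless: it fixes all
colours other than `α` and `β`. -/
noncomputable def kempeSwapColor (u : V) (e : Sym2 V) : Option (Fin k) :=
  if ∃ v ∈ e, (C.kempeGraph α β).Reachable u v then (C.color e).map (Equiv.swap α β)
  else C.color e

theorem kempeSwapColor_of_reachable {u v : V} (h : (C.kempeGraph α β).Reachable u v) (w : V) :
    C.kempeSwapColor α β u s(v, w) = (C.color s(v, w)).map (Equiv.swap α β) := by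
  rw [kempeSwapColor, if_pos ⟨v, Sym2.mem_mk_left v w, h⟩]

theorem kempeSwapColor_of_not_reachable {u v : V} (h : ¬(C.kempeGraph α β).Reachable u v)
    (w : V) : C.kempeSwapColor α β u s(v, w) = C.color s(v, w) := by
  rw [kempeSwapColor]
  split_ifs with hR
  · obtain ⟨z, hz, huz⟩ := hR
    rcases Sym2.mem_iff.1 hz with rfl | rfl
    · exact absurd huz h
    cases hc : C.color s(v, z) with
    | none => rfl
    | some γ =>
      have hγα : γ ≠ α := fun hγ => h (huz.trans (Adj.reachable (Or.inl (by
        rw [Sym2.eq_swap, hc, hγ]))))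
      have hγβ : γ ≠ β := fun hγ => h (huz.trans (Adj.reachable (Or.inr (by
        rw [Sym2.eq_swap, hc, hγ]))))
      rw [Option.map_some, Equiv.swap_apply_of_ne_of_ne hγα hγβ]
  · rfl

variable (C α β) in
noncomputable def kempeSwap (u : V) : PartialEdgeColoring G k where
  color := C.kempeSwapColor α β u
  mem_edgeSet {e a} h := by
    unfold kempeSwapColor at h
    split_ifs at h
    · obtain ⟨b, hb, -⟩ := Option.map_eq_some_iff.1 h
      exact C.mem_edgeSet hb
    · exact C.mem_edgeSet h
  eq_of_color_eq {v w w' a} hw hw' := by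
    by_cases hv : (C.kempeGraph α β).Reachable u v
    · rw [kempeSwapColor_of_reachable hv] at hw hw'
      obtain ⟨b, hb, rfl⟩ := Option.map_eq_some_iff.1 hw
      obtain ⟨b', hb', hbb'⟩ := Option.map_eq_some_iff.1 hw'
      cases (Equiv.swap α β).injective hbb'
      exact C.eq_of_color_eq hb hb'
    · rw [kempeSwapColor_of_not_reachable hv] at hw hw'
      exact C.eq_of_color_eq hw hw'

@[simp]
theorem color_kempeSwap (u : V) : (C.kempeSwap α β u).color = C.kempeSwapColor α β u := rfl

theorem domain_kempeSwap (u : V) : (C.kempeSwap α β u).domain = C.domain := by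
  ext e
  change (C.kempeSwapColor α β u e).isSome ↔ (C.color e).isSome
  unfold kempeSwapColor
  split_ifs <;> simp

theorem Free.kempeSwap_of_not_reachable {u v : V} {γ : Fin k} (hv : C.Free v γ)
    (h : ¬(C.kempeGraph α β).Reachable u v) : (C.kempeSwap α β u).Free v γ := fun w => by
  simpa only [kempeSwap, kempeSwapColor_of_not_reachable h] using hv w

theorem Free.kempeSwap_of_ne {u v : V} {γ : Fin k} (hv : C.Free v γ) (hα : γ ≠ α)
    (hβ : γ ≠ β) : (C.kempeSwap α β u).Free v γ := by
  by_cases h : (C.kempeGraph α β).Reachable u v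
  · intro w hw
    simp only [kempeSwap, kempeSwapColor_of_reachable h, Option.map_eq_some_iff] at hw
    obtain ⟨b, hb, hbγ⟩ := hw
    rw [Equiv.swap_apply_eq_iff, Equiv.swap_apply_of_ne_of_ne hα hβ] at hbγ
    exact hv w (hbγ ▸ hb)
  · exact hv.kempeSwap_of_not_reachable h

theorem Free.kempeSwap_self {u : V} (hu : C.Free u β) : (C.kempeSwap α β u).Free u α := by
  intro w hw
  simp only [kempeSwap, kempeSwapColor_of_reachable (Reachable.refl u),
    Option.map_eq_some_iff] at hw
  obtain ⟨b, hb, hbα⟩ := hw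
  rw [Equiv.swap_apply_eq_iff, Equiv.swap_apply_left] at hbα
  exact hu w (hbα ▸ hb)

theorem IsFan.kempeSwap {u : V} (hf : C.IsFan x f m) (hα : C.Free x α)
    (hx : ¬(C.kempeGraph α β).Reachable u x)
    (hβ : ∀ i < m, C.color s(x, f (i + 1)) = some β →
      ¬(C.kempeGraph α β).Reachable u (f i)) :
    (C.kempeSwap α β u).IsFan x f m where
  adj := hf.adj
  injOn := hf.injOn
  color_zero := by rw [color_kempeSwap, kempeSwapColor_of_not_reachable hx, hf.color_zero]
  exists_color_succ {i} hi := by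
    obtain ⟨b, hb, hbf⟩ := hf.exists_color_succ hi
    refine ⟨b, by rwa [color_kempeSwap, kempeSwapColor_of_not_reachable hx], ?_⟩
    by_cases hbβ : b = β
    · exact hbf.kempeSwap_of_not_reachable (hβ i hi (hbβ ▸ hb))
    · exact hbf.kempeSwap_of_ne (fun h => hα _ (h ▸ hb)) hbβ

end Kempe

section Fan

variable [DecidableEq V] {α β : Fin k}

theorem IsFan.exists_shift (hf : C.IsFan x f (m + 1)) :
    ∃ D : PartialEdgeColoring G k, D.IsFan x (fun i => f (i + 1)) m ∧
      insert s(x, f 0) (C.domain \ {s(x, f 1)}) ⊆ D.domain ∧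
      (∀ δ, C.Free x δ → D.Free x δ) ∧
      ∀ δ, C.Free (f (m + 1)) δ → D.Free (f (m + 1)) δ := by
  have hxf {i} (hi : i ≤ m + 1) : f i ≠ x := (hf.adj hi).ne.symm
  have hf01 : s(x, f 0) ≠ s(x, f 1) :=
    mt Sym2.congr_right.1 (hf.ne (by omega) le_add_self (by omega))
  obtain ⟨b, hb, hb0⟩ := hf.exists_color_succ m.succ_pos
  have hbx : (C.uncolor s(x, f 1)).Free x b := fun w => by
    rw [color_uncolor, Function.update_apply]
    split_ifs with hw
    · exact (Option.some_ne_none b).symm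
    · exact fun hw' => hw (by rw [C.eq_of_color_eq hw' hb])
  let D := (C.uncolor s(x, f 1)).colorEdge (hf.adj (Nat.zero_le _)) hbx (hb0.uncolor _)
  have hD {e : Sym2 V} (h0 : e ≠ s(x, f 0)) (h1 : e ≠ s(x, f 1)) : D.color e = C.color e := by
    simp [D, Function.update_of_ne, h0, h1]
  have hDfree {v δ} (hv : C.Free v δ) (h : δ = b → v ≠ x ∧ v ≠ f 0) : D.Free v δ :=
    (hv.uncolor _).colorEdge _ _ _ h
  refine ⟨D, ⟨fun hi => hf.adj (by omega), fun i hi j hj h => ?_, ?_, fun {i} hi => ?_⟩,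
    ?_, fun δ hδ => hDfree hδ fun hδb => ?_,
    fun δ hδ => hDfree hδ fun _ => ⟨hxf le_rfl, hf.ne le_rfl (Nat.zero_le _) (by omega)⟩⟩
  · have := hf.injOn (Set.mem_Iic.2 (Nat.succ_le_succ (Set.mem_Iic.1 hi)))
      (Set.mem_Iic.2 (Nat.succ_le_succ (Set.mem_Iic.1 hj))) h
    omega
  · simp [D, hf01.symm]
  · obtain ⟨c, hc, hcf⟩ := hf.exists_color_succ (Nat.succ_lt_succ hi)
    refine ⟨c, ?_, hDfree hcf fun _ =>
      ⟨hxf (by omega), hf.ne (by omega) (Nat.zero_le _) (by omega)⟩⟩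
    rw [hD (mt Sym2.congr_right.1 (hf.ne (by omega) (Nat.zero_le _) (by omega)))
      (mt Sym2.congr_right.1 (hf.ne (by omega) le_add_self (by omega)))]
    exact hc
  · simp only [D, domain_colorEdge, domain_uncolor, subset_refl]
  · subst hδb
    exact absurd hb (hδ (f 1))

theorem IsFan.exists_extend_of_free {δ : Fin k}
    (hf : C.IsFan x f m) (hx : C.Free x δ) (hm : C.Free (f m) δ) :
    ∃ C' : PartialEdgeColoring G k, insert s(x, f 0) C.domain ⊆ C'.domain := by
  induction m generalizing C f with
  | zero => exact ⟨C.colorEdge (hf.adj le_rfl) hx hm, (domain_colorEdge ..).ge⟩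
  | succ m ih =>
    obtain ⟨D, hD, hdom, hDx, hDm⟩ := hf.exists_shift
    obtain ⟨C', hC'⟩ := ih hD (hDx δ hx) (hDm δ hm)
    refine ⟨C', fun e he => hC' ?_⟩
    by_cases he1 : e = s(x, f 1)
    · exact .inl he1
    · exact .inr (hdom (Set.mem_insert_iff.1 he |>.imp id fun h => ⟨h, he1⟩))

theorem IsFan.exists_extend_of_kempeSwap (hf : C.IsFan x f m) (hα : C.Free x α)
    (hβm : C.Free (f m) β) (hx : ¬(C.kempeGraph α β).Reachable (f m) x)
    (hβ : ∀ i < m, C.color s(x, f (i + 1)) = some β →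
      ¬(C.kempeGraph α β).Reachable (f m) (f i)) :
    ∃ C' : PartialEdgeColoring G k, insert s(x, f 0) C.domain ⊆ C'.domain := by
  obtain ⟨C', hC'⟩ := (hf.kempeSwap hα hx hβ).exists_extend_of_free
    (hα.kempeSwap_of_not_reachable hx) hβm.kempeSwap_self
  exact ⟨C', by rwa [domain_kempeSwap] at hC'⟩

theorem IsFan.exists_extend_of_color_eq [Fintype V] (hf : C.IsFan x f m) (hα : C.Free x α)
    (hβ : C.Free (f m) β) {j : ℕ} (hj : j + 1 ≤ m) (hxj : C.color s(x, f (j + 1)) = some β) :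
    ∃ C' : PartialEdgeColoring G k, insert s(x, f 0) C.domain ⊆ C'.domain := by
  classical
  have hβj : C.Free (f j) β := by
    obtain ⟨b, hb, hbf⟩ := hf.exists_color_succ hj
    rwa [← Option.some_injective _ (hb.symm.trans hxj)]
  have hβ_unique {i} (hi : i < m) (h : C.color s(x, f (i + 1)) = some β) : i = j := by
    by_contra hij
    exact hf.ne hi hj (by omega) (C.eq_of_color_eq h hxj)
  have hnot_all : ¬((C.kempeGraph α β).Reachable x (f j) ∧
      (C.kempeGraph α β).Reachable x (f m)) := by
    rintro ⟨hxj', hxm'⟩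
    have h3 : #{x, f j, f m} = 3 := card_eq_three.2 ⟨x, f j, f m, (hf.adj (by omega)).ne,
      (hf.adj le_rfl).ne, hf.ne (by omega) le_rfl (by omega), rfl⟩
    have := card_le_two_of_reachable_of_degree_lt_two (C.degree_kempeGraph_le_two ·)
      (s := {x, f j, f m}) (u := x) <| by
        simp only [mem_insert, mem_singleton, forall_eq_or_imp, forall_eq]
        exact ⟨⟨.refl x, C.degree_kempeGraph_lt_two (.inl hα)⟩,
          ⟨hxj', C.degree_kempeGraph_lt_two (.inr hβj)⟩,
          ⟨hxm', C.degree_kempeGraph_lt_two (.inr hβ)⟩⟩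
    omega
  by_cases hxj' : (C.kempeGraph α β).Reachable x (f j)
  · have hxm : ¬(C.kempeGraph α β).Reachable (f m) x := fun h => hnot_all ⟨hxj', h.symm⟩
    exact hf.exists_extend_of_kempeSwap hα hβ hxm fun i hi h =>
      hβ_unique hi h ▸ fun h' => hxm (h'.trans hxj'.symm)
  · exact (hf.mono (by omega)).exists_extend_of_kempeSwap hα hβj (fun h => hxj' h.symm)
      fun i hi h => absurd (hβ_unique (by omega) h) (by omega)

theorem IsFan.exists_extend [Fintype V] [DecidableRel G.Adj] (hk : ∀ v, G.degree v < k)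
    (hα : C.Free x α) {f : ℕ → V} {m : ℕ} (hf : C.IsFan x f m) :
    ∃ C' : PartialEdgeColoring G k, insert s(x, f 0) C.domain ⊆ C'.domain := by
  obtain ⟨β, hβ⟩ := C.exists_free (hk (f m))
  by_cases hβx : C.Free x β
  · exact hf.exists_extend_of_free hβx hβ
  obtain ⟨w, hw⟩ : ∃ w, C.color s(x, w) = some β := by simpa [Free] using hβx
  by_cases hwf : ∃ i ≤ m, f i = w
  · obtain ⟨_ | j, hj, rfl⟩ := hwf
    · simp [hf.color_zero] at hw
    · exact hf.exists_extend_of_color_eq hα hβ hj hw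
  · push Not at hwf
    have := hf.lt_card
    simpa using (hf.snoc hw hβ hwf).exists_extend hk hα
termination_by Fintype.card V - m

theorem exists_extend [Fintype V] [DecidableRel G.Adj] (hk : ∀ v, G.degree v < k)
    {x y : V} (h : G.Adj x y) (hxy : C.color s(x, y) = none) :
    ∃ C' : PartialEdgeColoring G k, insert s(x, y) C.domain ⊆ C'.domain := by
  obtain ⟨α, hα⟩ := C.exists_free (hk x)
  exact IsFan.exists_extend (f := fun _ => y) (m := 0) hk hα
    ⟨fun _ => h, fun i hi j hj _ => by simp_all, hxy, fun hi => absurd hi (Nat.not_lt_zero _)⟩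

end Fan

end PartialEdgeColoring

theorem exists_partialEdgeColoring_edgeSet_subset_domain [Fintype V] [DecidableEq V]
    [DecidableRel G.Adj] (hk : ∀ v, G.degree v < k) :
    ∃ C : PartialEdgeColoring G k, G.edgeSet ⊆ C.domain := by
  have : Finite (PartialEdgeColoring G k) :=
    Finite.of_injective PartialEdgeColoring.color fun _ _ => PartialEdgeColoring.ext
  have : Nonempty (PartialEdgeColoring G k) := ⟨⟨fun _ => none, nofun, nofun⟩⟩
  obtain ⟨C, hC⟩ := Finite.exists_max fun C : PartialEdgeColoring G k => C.domain.ncard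
  refine ⟨C, fun e he => by_contra fun hne => ?_⟩
  induction e using Sym2.ind with | h x y => ?_
  obtain ⟨C', hC'⟩ := C.exists_extend hk he (Option.not_isSome_iff_eq_none.1 hne)
  exact (hC C').not_gt (Set.ncard_lt_ncard ((Set.ssubset_insert hne).trans_subset hC'))

theorem lineGraph_colorable [Fintype V] [DecidableEq V] [DecidableRel G.Adj]
    (hk : ∀ v, G.degree v < k) : G.lineGraph.Colorable k := by
  obtain ⟨C, hC⟩ := exists_partialEdgeColoring_edgeSet_subset_domain hk
  have hC (e : G.edgeSet) : (C.color e).isSome := C.mem_domain.1 (hC e.2)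
  refine ⟨Coloring.mk (fun e => (C.color e).get (hC e)) fun {e e'} hadj hcol => ?_⟩
  obtain ⟨hne, v, hve, hve'⟩ := lineGraph_adj_iff_exists.1 hadj
  obtain ⟨w, hw⟩ := Sym2.mem_iff_exists.1 hve
  obtain ⟨w', hw'⟩ := Sym2.mem_iff_exists.1 hve'
  have he : C.color s(v, w) = some ((C.color e).get (hC e)) := by rw [← hw, Option.some_get]
  have he' : C.color s(v, w') = some ((C.color e).get (hC e)) := by
    rw [hcol, ← hw', Option.some_get]
  exact hne (Subtype.ext (by rw [hw, hw', C.eq_of_color_eq he he']))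

end SimpleGraph

/-- **Vizing's theorem.** Every finite simple graph `G` with maximum degree `Δ`
admits a proper edge coloring using at most `Δ + 1` colors: an assignment of
colors from `Fin (Δ + 1)` to the edges of `G` such that any two distinct edges
sharing a vertex receive different colors. -/
theorem vizing_edge_coloring {V : Type*} [Fintype V] [DecidableEq V]
    (G : SimpleGraph V) [DecidableRel G.Adj] :
    ∃ φ : G.edgeSet → Fin (G.maxDegree + 1),
      ∀ e f : G.edgeSet, e ≠ f →
        (∃ v : V, v ∈ (e : Sym2 V) ∧ v ∈ (f : Sym2 V)) → φ e ≠ φ f := by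
  obtain ⟨φ⟩ := G.lineGraph_colorable fun v => Nat.lt_succ_of_le (G.degree_le_maxDegree v)
  exact ⟨φ, fun e f hne hef =>
    φ.valid (SimpleGraph.lineGraph_adj_iff_exists.2 ⟨hne, hef⟩)⟩
end

section
/- Let G = (V, E) be a finite simple graph with maximum degree Δ, let F ⊆ E be a subset of edges, and let φ be a proper (Δ+1)-edge-coloring of F (i.e., φ : F → {1, …, Δ+1} assigns different colors to any two distinct edges of F sharing a vertex). Then for every edge e ∈ E \ F there exists a proper (Δ+1)-edge-coloring of F ∪ {e}. -/
/-!
Vizing's fan argument. Let `x y₀` be the uncoloured edge and take a maximal fan `y₀, …, y_k`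
at `x`: each edge `x yᵢ₊₁` carries a colour missing at `yᵢ`. Since at most `Δ` colours are
used at a vertex, some colour `a` is missing at `x` and some `b` at `y_k`. If `b` is also
missing at `x`, rotating the fan (`x yᵢ` takes the colour of `x yᵢ₊₁`, and `x y_k` takes `b`)
colours `x y₀`. Otherwise, by maximality the `b`-edge at `x` goes to a fan vertex `z`, and `b`
is missing at the predecessor `p` of `z`. In the subgraph of `a`- and `b`-edges all degrees
are at most `2` and `x`, `p`, `y_k` have degree at most `1`, so the component of `x` cannot
contain both `p` and `y_k`. Swapping `a` and `b` on that component frees `b` at `x`; if `p`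
is off the component, rotate the fan up to `p`, otherwise `y_k` is off it and the whole fan,
still a fan after the swap, can be rotated.
-/

open Function List

namespace SimpleGraph

variable {V κ : Type*} {G : SimpleGraph V} {c : Sym2 V → Option κ}

/-- A connected graph on `n` vertices has at least `n - 1` edges, whereas here the degree sum
of the component of `x` would be at most `2 n - 3`. -/
theorem not_reachable_of_degree_le_one [Fintype V] {H : SimpleGraph V} [DecidableRel H.Adj]
    (hH : ∀ v, H.degree v ≤ 2) {x p q : V} (hxp : x ≠ p) (hxq : x ≠ q) (hpq : p ≠ q)
    (hx : H.degree x ≤ 1) (hp : H.degree p ≤ 1) (hq : H.degree q ≤ 1) (hr : H.Reachable x p) :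
    ¬ H.Reachable x q := by
  classical
  intro hr'
  let C := H.connectedComponentMk x
  let K := H.induce C.supp
  have hmem {v : V} (h : H.Reachable x v) : v ∈ C.supp := ConnectedComponent.eq.2 h.symm
  have hdeg (v : C.supp) : K.degree v = H.degree v :=
    degree_induce_of_neighborSet_subset fun _ hw => C.mem_supp_of_adj_mem_supp v.2 hw
  let S : Finset C.supp := {⟨x, hmem .rfl⟩, ⟨p, hmem hr⟩, ⟨q, hmem hr'⟩}
  have hS : S.card = 3 := by
    rw [Finset.card_insert_of_notMem, Finset.card_pair] <;> simp [hxp, hxq, hpq]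
  have hsum : ∑ v, K.degree v + 3 ≤ 2 * Fintype.card C.supp :=
    calc ∑ v, K.degree v + 3
        = ∑ v, (K.degree v + if v ∈ S then 1 else 0) := by
          rw [Finset.sum_add_distrib, Finset.sum_boole, Finset.filter_mem_eq_inter,
            Finset.univ_inter, hS, Nat.cast_ofNat]
      _ ≤ ∑ _v : C.supp, 2 := by
          gcongr with v
          rw [hdeg]
          split_ifs with hv
          · simp only [S, Finset.mem_insert, Finset.mem_singleton] at hv
            rcases hv with rfl | rfl | rfl <;> dsimp only <;> omega
          · simpa using hH v
      _ = 2 * Fintype.card C.supp := by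
          rw [Finset.sum_const, Finset.card_univ, smul_eq_mul, mul_comm]
  have hconn : K.Connected := C.connected_toSimpleGraph
  have hcard := hconn.card_vert_le_card_edgeSet_add_one
  rw [sum_degrees_eq_twice_card_edges] at hsum
  rw [Nat.card_eq_fintype_card, Nat.card_eq_fintype_card, ← edgeFinset_card] at hcard
  omega

structure IsPartialEdgeColoring (G : SimpleGraph V) (c : Sym2 V → Option κ) : Prop where
  mem_edgeSet {e : Sym2 V} {a : κ} : c e = some a → e ∈ G.edgeSet
  eq_of_eq_some {v w w' : V} {a : κ} : c s(v, w) = some a → c s(v, w') = some a → w = w'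

def IsMissing (c : Sym2 V → Option κ) (v : V) (a : κ) : Prop :=
  ∀ w, c s(v, w) ≠ some a

def coloredEdges (c : Sym2 V → Option κ) : Set (Sym2 V) :=
  {e | c e ≠ none}

namespace IsPartialEdgeColoring

theorem eq_of_mem_of_eq_some (hc : IsPartialEdgeColoring G c) {e f : Sym2 V} {v : V} {a : κ}
    (he : v ∈ e) (hf : v ∈ f) (hce : c e = some a) (hcf : c f = some a) : e = f := by
  obtain ⟨w, rfl⟩ := Sym2.mem_iff_exists.1 he
  obtain ⟨w', rfl⟩ := Sym2.mem_iff_exists.1 hf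
  rw [hc.eq_of_eq_some hce hcf]

theorem exists_isMissing [Fintype V] [DecidableRel G.Adj] [Fintype κ]
    (hc : IsPartialEdgeColoring G c) (hκ : G.maxDegree < Fintype.card κ) (v : V) :
    ∃ a, IsMissing c v a := by
  by_contra! h
  simp only [IsMissing, not_forall, not_not] at h
  choose w hw using h
  have hinj : Injective fun a => (⟨w a, hc.mem_edgeSet (hw a)⟩ : G.neighborSet v) :=
    fun a b hab => Option.some_injective _ <| by
      rw [← hw a, ← hw b, show w a = w b from congrArg Subtype.val hab]
  have := (Fintype.card_le_of_injective _ hinj).trans_eq (G.card_neighborSet_eq_degree v)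
  exact (hκ.trans_le this).not_ge (G.degree_le_maxDegree v)

variable [DecidableEq V]

theorem update_none (hc : IsPartialEdgeColoring G c) (e : Sym2 V) :
    IsPartialEdgeColoring G (update c e none) where
  mem_edgeSet {f a} h := by
    rw [update_apply] at h
    split_ifs at h
    exact hc.mem_edgeSet h
  eq_of_eq_some {v w w' a} h h' := by
    rw [update_apply] at h h'
    split_ifs at h h'
    exact hc.eq_of_eq_some h h'

theorem update_some (hc : IsPartialEdgeColoring G c) {x y : V} {a : κ} (hxy : G.Adj x y)
    (hx : IsMissing c x a) (hy : IsMissing c y a) :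
    IsPartialEdgeColoring G (update c s(x, y) (some a)) where
  mem_edgeSet {f b} h := by
    rw [update_apply] at h
    split_ifs at h with hf
    · exact hf ▸ hxy
    · exact hc.mem_edgeSet h
  eq_of_eq_some {v w w' b} h h' := by
    have hv {u : V} (hu : s(v, u) = s(x, y)) : IsMissing c v a := by
      rcases Sym2.mem_iff.1 (hu ▸ Sym2.mem_mk_left v u) with rfl | rfl
      exacts [hx, hy]
    rw [update_apply] at h h'
    split_ifs at h h' with h₁ h₂ h₂
    · exact Sym2.congr_right.1 (h₁.trans h₂.symm)
    · cases h; exact absurd h' (hv h₁ w')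
    · cases h'; exact absurd h (hv h₂ w)
    · exact hc.eq_of_eq_some h h'

end IsPartialEdgeColoring

namespace IsMissing

variable [DecidableEq V] {v : V} {a : κ}

theorem update_none (h : IsMissing c v a) (e : Sym2 V) : IsMissing (update c e none) v a :=
  fun w hw => by
    rw [update_apply] at hw
    split_ifs at hw
    exact h w hw

theorem update (h : IsMissing c v a) {e : Sym2 V} {o : Option κ} (ho : v ∈ e → o ≠ some a) :
    IsMissing (update c e o) v a := fun w hw => by
  rw [update_apply] at hw
  split_ifs at hw with he
  · exact ho (he ▸ Sym2.mem_mk_left v w) hw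
  · exact h w hw

end IsMissing

def FanStep (c : Sym2 V → Option κ) (x y z : V) : Prop :=
  ∃ γ, c s(x, z) = some γ ∧ IsMissing c y γ

def IsFan (c : Sym2 V → Option κ) (x : V) (l : List V) : Prop :=
  l.Nodup ∧ l.IsChain (FanStep c x)

theorem IsFan.adj (hc : IsPartialEdgeColoring G c) {x y₀ : V} {l : List V}
    (hfan : IsFan c x (y₀ :: l)) (hxy : G.Adj x y₀) : ∀ w ∈ y₀ :: l, G.Adj x w :=
  hfan.2.induction _ _ (fun _ _ ⟨_, hz, _⟩ _ => hc.mem_edgeSet hz) fun _ => hxy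

theorem exists_maximal_isFan [Fintype V] (c : Sym2 V → Option κ) (x y₀ : V) :
    ∃ l, IsFan c x (y₀ :: l) ∧
      ∀ z γ, c s(x, z) = some γ → IsMissing c (l.getLastD y₀) γ → z ∈ y₀ :: l := by
  obtain ⟨l, hl, hmin⟩ := (measure fun l : List V => Fintype.card V - l.length).wf.has_min
    {l | IsFan c x (y₀ :: l)} ⟨[], nodup_singleton _, isChain_singleton _⟩
  refine ⟨l, hl, fun z γ hz hγ => ?_⟩
  by_contra hzl
  have hfan : IsFan c x (y₀ :: (l ++ [z])) := by
    rw [IsFan, ← cons_append, nodup_append]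
    refine ⟨⟨hl.1, nodup_singleton z, fun u hu w hw h => hzl (mem_singleton.1 hw ▸ h ▸ hu)⟩,
      hl.2.append (isChain_singleton z) ?_⟩
    simp only [getLast?_cons, ← getLastD_eq_getLast?, Option.mem_def, Option.some.injEq,
      head?_cons, forall_eq']
    exact ⟨γ, hz, hγ⟩
  have hlen := hfan.1.length_le_card
  refine hmin (l ++ [z]) hfan (?_ : Fintype.card V - _ < Fintype.card V - _)
  simp only [length_cons, length_append] at hlen ⊢
  omega

theorem IsPartialEdgeColoring.exists_extension_of_isFan [DecidableEq V] {x : V} {d : κ} :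
    ∀ (l : List V) {c : Sym2 V → Option κ} {y₀ : V}, IsPartialEdgeColoring G c → G.Adj x y₀ →
    IsFan c x (y₀ :: l) → IsMissing c x d → IsMissing c (l.getLastD y₀) d →
    ∃ c' : Sym2 V → Option κ, IsPartialEdgeColoring G c' ∧
      insert s(x, y₀) (coloredEdges c) ⊆ coloredEdges c'
  | [], c, y₀, hc, hxy, _, hdx, hdy => by
    refine ⟨update c s(x, y₀) (some d), hc.update_some hxy hdx hdy, fun e he => ?_⟩
    by_cases h : e = s(x, y₀) <;> simp_all [coloredEdges]
  | z :: l, c, y₀, hc, hxy, hfan, hdx, hdy => by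
    have hadj := hfan.adj hc hxy
    obtain ⟨hnd, hchain⟩ := hfan
    obtain ⟨⟨γ, hz, hγ⟩, hchain⟩ := isChain_cons_cons.1 hchain
    have hfresh : ∀ w ∈ z :: l, w ∉ s(x, y₀) := fun w hw hxw => by
      rcases Sym2.mem_iff.1 hxw with rfl | rfl
      exacts [(hadj w (mem_cons_of_mem _ hw)).ne rfl, (nodup_cons.1 hnd).1 hw]
    -- move the colour `γ` from `x z` to `x y₀`, then rotate the shorter fan `z :: l`
    set c₂ := update (update c s(x, z) none) s(x, y₀) (some γ) with hc₂
    have hγx : IsMissing (update c s(x, z) none) x γ := fun w hw => by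
      rw [update_apply] at hw
      split_ifs at hw with h
      exact h (by rw [hc.eq_of_eq_some hw hz])
    have hchain₂ : (z :: l).IsChain (FanStep c₂ x) := by
      refine hchain.imp_of_mem_tail_imp fun u w hu hw ⟨δ, hw', hδ⟩ => ⟨δ, ?_, ?_⟩
      · have hwz : w ≠ z := fun h => (nodup_cons.1 (nodup_cons.1 hnd).2).1 (h ▸ hw)
        have hwy : w ≠ y₀ := fun h => (nodup_cons.1 hnd).1 (h ▸ mem_cons_of_mem _ hw)
        rwa [hc₂, update_of_ne (mt Sym2.congr_right.1 hwy),
          update_of_ne (mt Sym2.congr_right.1 hwz)]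
      · exact (hδ.update_none _).update fun hu' => absurd hu' (hfresh u hu)
    have hdx₂ : IsMissing c₂ x d :=
      (hdx.update_none _).update fun _ h => hdx z (Option.some_injective _ h ▸ hz)
    have hdy₂ : IsMissing c₂ (l.getLastD z) d :=
      ((getLastD_cons ▸ hdy).update_none _).update fun h =>
        absurd h (hfresh _ getLastD_mem_cons)
    obtain ⟨c₃, hc₃, hsub⟩ := exists_extension_of_isFan l
      ((hc.update_none _).update_some hxy hγx (hγ.update_none _)) (hc.mem_edgeSet hz)
      ⟨(nodup_cons.1 hnd).2, hchain₂⟩ hdx₂ hdy₂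
    refine ⟨c₃, hc₃, fun e he => hsub ?_⟩
    by_cases h₁ : e = s(x, z) <;> by_cases h₂ : e = s(x, y₀) <;> simp_all [coloredEdges, c₂]

section Kempe

variable {a b γ : κ} {x v w : V}

def kempeGraph (c : Sym2 V → Option κ) (a b : κ) : SimpleGraph V :=
  fromEdgeSet {e | c e = some a ∨ c e = some b}

theorem kempeGraph_adj :
    (kempeGraph c a b).Adj v w ↔ (c s(v, w) = some a ∨ c s(v, w) = some b) ∧ v ≠ w :=
  fromEdgeSet_adj _

theorem IsPartialEdgeColoring.degree_kempeGraph_le [Fintype V]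
    [DecidableRel (kempeGraph c a b).Adj] (hc : IsPartialEdgeColoring G c) (v : V)
    {T : Finset (Option κ)}
    (hT : ∀ w, c s(v, w) = some a ∨ c s(v, w) = some b → c s(v, w) ∈ T) :
    (kempeGraph c a b).degree v ≤ T.card := by
  rw [← card_neighborFinset_eq_degree]
  refine Finset.card_le_card_of_injOn (fun w => c s(v, w)) (fun w hw => hT w ?_) ?_
  · exact (kempeGraph_adj.1 ((mem_neighborFinset _ _ _).1 hw)).1
  · intro w hw w' _ (h : c s(v, w) = c s(v, w'))
    rcases (kempeGraph_adj.1 ((mem_neighborFinset _ _ _).1 hw)).1 with hw | hw <;>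
      exact hc.eq_of_eq_some hw (h ▸ hw)

theorem IsPartialEdgeColoring.not_reachable_kempeGraph [Fintype V]
    (hc : IsPartialEdgeColoring G c) {p q : V} (hxp : x ≠ p) (hxq : x ≠ q) (hpq : p ≠ q)
    (hx : IsMissing c x a) (hp : IsMissing c p b) (hq : IsMissing c q b)
    (hr : (kempeGraph c a b).Reachable x p) : ¬ (kempeGraph c a b).Reachable x q := by
  classical
  have hdeg {u : V} {δ : κ} (hδ : δ = a ∨ δ = b) (hu : IsMissing c u δ) :
      (kempeGraph c a b).degree u ≤ 1 := by
    rcases hδ with rfl | rfl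
    · refine (hc.degree_kempeGraph_le u (T := {some b}) fun w hw => ?_).trans_eq rfl
      simpa [hu w] using hw
    · refine (hc.degree_kempeGraph_le u (T := {some a}) fun w hw => ?_).trans_eq rfl
      simpa [hu w] using hw
  exact not_reachable_of_degree_le_one
    (fun u => (hc.degree_kempeGraph_le u (T := {some a, some b}) fun _ h => by
      rcases h with h | h <;> simp [h]).trans Finset.card_le_two)
    hxp hxq hpq (hdeg (.inl rfl) hx) (hdeg (.inr rfl) hp) (hdeg (.inr rfl) hq) hr

variable [DecidableEq κ]

/-- Swapping `a` and `b` on the `a`/`b`-component of `x`. Every edge meeting the component is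
passed through the transposition, which only changes its `a`- and `b`-edges. -/
noncomputable def kempeSwap (c : Sym2 V → Option κ) (a b : κ) (x : V) : Sym2 V → Option κ :=
  open Classical in
  fun e => if ∃ v ∈ e, (kempeGraph c a b).Reachable x v then (c e).map (Equiv.swap a b) else c e

theorem kempeSwap_mk_of_reachable (h : (kempeGraph c a b).Reachable x v) :
    kempeSwap c a b x s(v, w) = (c s(v, w)).map (Equiv.swap a b) :=
  if_pos ⟨v, Sym2.mem_mk_left v w, h⟩

theorem kempeSwap_mk_of_not_reachable (h : ¬ (kempeGraph c a b).Reachable x v) :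
    kempeSwap c a b x s(v, w) = c s(v, w) := by
  rw [kempeSwap]
  split_ifs with hex
  · obtain ⟨u, hu, hxu⟩ := hex
    rcases Sym2.mem_iff.1 hu with rfl | rfl
    · exact absurd hxu h
    -- an `a`- or `b`-edge `v u` would put `v` in the component of `u`
    cases hvu : c s(v, u) with
    | none => rfl
    | some δ =>
      have hne : u ≠ v := fun h' => h (h' ▸ hxu)
      refine congrArg some (Equiv.swap_apply_of_ne_of_ne ?_ ?_) <;> rintro rfl <;>
        exact h (hxu.trans (kempeGraph_adj.2 ⟨by simp [Sym2.eq_swap, hvu], hne⟩).reachable)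
  · rfl

theorem kempeSwap_mk_eq_some_of_reachable (h : (kempeGraph c a b).Reachable x v) :
    kempeSwap c a b x s(v, w) = some γ ↔ c s(v, w) = some (Equiv.swap a b γ) := by
  rw [kempeSwap_mk_of_reachable h, Option.map_eq_some_iff]
  constructor
  · rintro ⟨δ, hδ, rfl⟩
    rw [hδ, Equiv.swap_apply_self]
  · exact fun hγ => ⟨_, hγ, Equiv.swap_apply_self _ _ _⟩

theorem isMissing_kempeSwap_of_reachable (h : (kempeGraph c a b).Reachable x v) :
    IsMissing (kempeSwap c a b x) v γ ↔ IsMissing c v (Equiv.swap a b γ) :=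
  forall_congr' fun _ => not_congr (kempeSwap_mk_eq_some_of_reachable h)

theorem isMissing_kempeSwap_of_not_reachable (h : ¬ (kempeGraph c a b).Reachable x v) :
    IsMissing (kempeSwap c a b x) v γ ↔ IsMissing c v γ :=
  forall_congr' fun _ => by rw [kempeSwap_mk_of_not_reachable h]

theorem coloredEdges_kempeSwap : coloredEdges (kempeSwap c a b x) = coloredEdges c := by
  ext e
  simp only [coloredEdges, Set.mem_ofPred_eq, kempeSwap]
  split_ifs <;> simp

theorem FanStep.kempeSwap {y : V} (h : FanStep c x y w) (ha : c s(x, w) ≠ some a)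
    (hb : c s(x, w) ≠ some b) : FanStep (kempeSwap c a b x) x y w := by
  obtain ⟨δ, hw, hδ⟩ := h
  have hswap : Equiv.swap a b δ = δ :=
    Equiv.swap_apply_of_ne_of_ne (fun h => ha (h ▸ hw)) (fun h => hb (h ▸ hw))
  refine ⟨δ, (kempeSwap_mk_eq_some_of_reachable .rfl).2 (by rwa [hswap]), ?_⟩
  by_cases hy : (kempeGraph c a b).Reachable x y
  · rwa [isMissing_kempeSwap_of_reachable hy, hswap]
  · rwa [isMissing_kempeSwap_of_not_reachable hy]

theorem IsPartialEdgeColoring.kempeSwap (hc : IsPartialEdgeColoring G c) (a b : κ) (x : V) :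
    IsPartialEdgeColoring G (kempeSwap c a b x) where
  mem_edgeSet {e δ} h := by
    rw [SimpleGraph.kempeSwap] at h
    split_ifs at h
    · obtain ⟨_, hδ, _⟩ := Option.map_eq_some_iff.1 h
      exact hc.mem_edgeSet hδ
    · exact hc.mem_edgeSet h
  eq_of_eq_some {v w w' δ} h h' := by
    by_cases hv : (kempeGraph c a b).Reachable x v
    · rw [kempeSwap_mk_eq_some_of_reachable hv] at h h'
      exact hc.eq_of_eq_some h h'
    · rw [kempeSwap_mk_of_not_reachable hv] at h h'
      exact hc.eq_of_eq_some h h'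

end Kempe

section Extension

variable [Fintype V] [DecidableEq V] [DecidableEq κ] {x y₀ z : V} {a b : κ}

theorem IsPartialEdgeColoring.exists_extension_of_isFan_append
    (hc : IsPartialEdgeColoring G c) (hxy : G.Adj x y₀) {l₁ l₂ : List V}
    (hfan : IsFan c x (y₀ :: (l₁ ++ z :: l₂))) (ha : IsMissing c x a)
    (hz : c s(x, z) = some b) (hb : IsMissing c ((l₁ ++ z :: l₂).getLastD y₀) b) :
    ∃ c' : Sym2 V → Option κ, IsPartialEdgeColoring G c' ∧
      insert s(x, y₀) (coloredEdges c) ⊆ coloredEdges c' := by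
  have hadj := hfan.adj hc hxy
  obtain ⟨hnd, hchain⟩ := hfan
  rw [← cons_append] at hnd hchain
  obtain ⟨hnd₁, hnd₂, hdisj⟩ := nodup_append.1 hnd
  obtain ⟨hchain₁, hchain₂, hstep⟩ := isChain_append.1 hchain
  set p := l₁.getLastD y₀
  set q := l₂.getLastD z
  have hq : (l₁ ++ z :: l₂).getLastD y₀ = q := by
    simp [q, getLastD_eq_getLast?, getLast?_append, getLast?_cons]
  rw [hq] at hb
  have hpb : IsMissing c p b := by
    obtain ⟨δ, hδ, hp⟩ := hstep p (by simp [p, getLast?_cons, getLastD_eq_getLast?]) z rfl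
    rwa [Option.some_injective _ (hδ.symm.trans hz)] at hp
  have hzl₁ : z ∉ l₁ := fun h => hdisj z (mem_cons_of_mem _ h) z mem_cons_self rfl
  have hkeep (L : List V) (hL : L.IsChain (FanStep c x)) (hzL : z ∉ L.tail) :
      L.IsChain (FanStep (SimpleGraph.kempeSwap c a b x) x) :=
    hL.imp_of_mem_tail_imp fun _ w _ hw h =>
      h.kempeSwap (ha w) fun h' => hzL (hc.eq_of_eq_some h' hz ▸ hw)
  have hbx : IsMissing (SimpleGraph.kempeSwap c a b x) x b :=
    (isMissing_kempeSwap_of_reachable .rfl).2 (by rwa [Equiv.swap_apply_right])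
  rw [← coloredEdges_kempeSwap (a := a) (b := b) (x := x)]
  by_cases hp : (kempeGraph c a b).Reachable x p
  · -- the swap turns `x z` into an `a`-edge with `a` missing at `p`, keeping the fan intact
    have hqR := hc.not_reachable_kempeGraph (hadj p (mem_append_left _ getLastD_mem_cons)).ne
      (hadj q (mem_cons_of_mem _ (mem_append_right _ getLastD_mem_cons))).ne
      (hdisj p getLastD_mem_cons q getLastD_mem_cons) ha hpb hb hp
    refine (hc.kempeSwap a b x).exists_extension_of_isFan (l₁ ++ z :: l₂) hxy ⟨hnd, ?_⟩ hbx
      (hq ▸ (isMissing_kempeSwap_of_not_reachable hqR).2 hb)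
    refine (hkeep _ hchain₁ hzl₁).append (hkeep _ hchain₂ (nodup_cons.1 hnd₂).1) ?_
    intro u hu w hw
    simp only [getLast?_cons, ← getLastD_eq_getLast?, Option.mem_def, Option.some.injEq,
      head?_cons] at hu hw
    subst hu hw
    refine ⟨a, (kempeSwap_mk_eq_some_of_reachable .rfl).2 ?_,
      (isMissing_kempeSwap_of_reachable hp).2 ?_⟩ <;> rwa [Equiv.swap_apply_left]
  · exact (hc.kempeSwap a b x).exists_extension_of_isFan l₁ hxy ⟨hnd₁, hkeep _ hchain₁ hzl₁⟩
      hbx ((isMissing_kempeSwap_of_not_reachable hp).2 hpb)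

theorem IsPartialEdgeColoring.exists_extension [DecidableRel G.Adj] [Fintype κ]
    (hc : IsPartialEdgeColoring G c) (hκ : G.maxDegree < Fintype.card κ) (hxy : G.Adj x y₀)
    (hnone : c s(x, y₀) = none) :
    ∃ c' : Sym2 V → Option κ, IsPartialEdgeColoring G c' ∧
      insert s(x, y₀) (coloredEdges c) ⊆ coloredEdges c' := by
  obtain ⟨l, hfan, hmax⟩ := exists_maximal_isFan c x y₀
  obtain ⟨a, ha⟩ := hc.exists_isMissing hκ x
  obtain ⟨b, hb⟩ := hc.exists_isMissing hκ (l.getLastD y₀)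
  by_cases hbx : IsMissing c x b
  · exact hc.exists_extension_of_isFan l hxy hfan hbx hb
  · obtain ⟨z, hz⟩ : ∃ z, c s(x, z) = some b := by simpa [IsMissing] using hbx
    have hzl : z ∈ l :=
      (mem_cons.1 (hmax z b hz hb)).resolve_left fun h => by simp [h, hnone] at hz
    obtain ⟨l₁, l₂, rfl⟩ := append_of_mem hzl
    exact hc.exists_extension_of_isFan_append hxy hfan ha hz hb

end Extension

theorem isPartialEdgeColoring_of_proper {F : Set (Sym2 V)} [DecidablePred (· ∈ F)]
    (hF : F ⊆ G.edgeSet) {φ : F → κ}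
    (hφ : ∀ e f : F, e ≠ f → (∃ v, v ∈ (e : Sym2 V) ∧ v ∈ (f : Sym2 V)) → φ e ≠ φ f) :
    IsPartialEdgeColoring G fun e => if h : e ∈ F then some (φ ⟨e, h⟩) else none where
  mem_edgeSet {e a} h := by
    split_ifs at h with he
    exact hF he
  eq_of_eq_some {v w w' a} h h' := by
    split_ifs at h h' with hw hw'
    by_contra hne
    refine hφ ⟨_, hw⟩ ⟨_, hw'⟩ (fun heq => hne (Sym2.congr_right.1 (congrArg Subtype.val heq)))
      ⟨v, Sym2.mem_mk_left _ _, Sym2.mem_mk_left _ _⟩ (Option.some_injective _ (h.trans h'.symm))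

theorem IsPartialEdgeColoring.exists_proper_of_subset (hc : IsPartialEdgeColoring G c)
    {S : Set (Sym2 V)} (hS : S ⊆ coloredEdges c) :
    ∃ ψ : S → κ, ∀ e f : S, e ≠ f →
      (∃ v, v ∈ (e : Sym2 V) ∧ v ∈ (f : Sym2 V)) → ψ e ≠ ψ f := by
  have hsome (e : S) : (c e).isSome := Option.isSome_iff_ne_none.2 (hS e.2)
  refine ⟨fun e => (c e).get (hsome e), fun e f hne ⟨v, he, hf⟩ heq => hne (Subtype.ext ?_)⟩
  refine hc.eq_of_mem_of_eq_some he hf (Option.some_get (hsome e)).symm ?_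
  rw [show (c e).get (hsome e) = (c f).get (hsome f) from heq, Option.some_get]

end SimpleGraph

/-- Extending a partial Vizing coloring by one edge: if `F` is a subset of the
edges of a finite simple graph `G` with maximum degree `Δ`, `φ` is a proper
`(Δ+1)`-edge-coloring of `F`, and `e` is an edge of `G` not in `F`, then there
is a proper `(Δ+1)`-edge-coloring of `F ∪ {e}` (edges of `F` may be recolored). -/
theorem extend_partial_vizing_coloring {V : Type*} [Fintype V] [DecidableEq V]
    (G : SimpleGraph V) [DecidableRel G.Adj]
    (F : Set (Sym2 V)) (hF : F ⊆ G.edgeSet)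
    (φ : F → Fin (G.maxDegree + 1))
    (hφ : ∀ e f : F, e ≠ f →
      (∃ v : V, v ∈ (e : Sym2 V) ∧ v ∈ (f : Sym2 V)) → φ e ≠ φ f)
    (e : Sym2 V) (he : e ∈ G.edgeSet \ F) :
    ∃ ψ : (F ∪ {e} : Set (Sym2 V)) → Fin (G.maxDegree + 1),
      ∀ e' f' : (F ∪ {e} : Set (Sym2 V)), e' ≠ f' →
        (∃ v : V, v ∈ (e' : Sym2 V) ∧ v ∈ (f' : Sym2 V)) → ψ e' ≠ ψ f' := by
  classical
  induction e using Sym2.ind with | _ x y => ?_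
  obtain ⟨c, hc, hsub⟩ := (SimpleGraph.isPartialEdgeColoring_of_proper hF hφ).exists_extension
    (by simp) he.1 (dif_neg he.2)
  refine hc.exists_proper_of_subset ?_
  rw [Set.union_singleton]
  exact (Set.insert_subset_insert fun f hf => by simp [SimpleGraph.coloredEdges, hf]).trans hsub
end

section
/- Let n ≥ 2 and Δ be positive integers with Δ ≤ n, and let X₁, …, X_Δ be {0,1}-valued random variables on a common probability space such that for every i ∈ {1, …, Δ}, the conditional probability of the event {Xᵢ = 1} given X₁, …, X_{i−1} is almost surely at most 3/(Δ − i + 1). Then Pr( Σ_{i=1}^{Δ} Xᵢ ≥ 30 ln n ) ≤ 1/n³. -/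
/-!
Exponential moments with base 2. As `Xᵢ ∈ {0,1}`, `2 ^ Xᵢ = 1 + 1{Xᵢ = 1}`, and
`2 ^ (X₁ + ⋯ + X_{i-1})` is measurable with respect to the history, so the hypothesis on `Xᵢ` gives
`E[2 ^ (X₁ + ⋯ + Xᵢ)] ≤ (1 + 3/(Δ-i+1)) E[2 ^ (X₁ + ⋯ + X_{i-1})]`. Hence
`E[2 ^ ∑ Xᵢ] ≤ ∏ (1 + 3/(Δ-i+1)) ≤ exp (3 H_Δ) ≤ e³ n³`, and Markov's inequality gives
`P(∑ Xᵢ ≥ 30 ln n) ≤ e³ n³ / 2 ^ (30 ln n) ≤ n⁻³`, since `30 ln 2 > 20`.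
-/

open MeasureTheory Finset ENNReal

theorem MeasureTheory.setLIntegral_le_mul_lintegral_of_measure_inter_le
    {α : Type*} {m m0 : MeasurableSpace α} (hm : m ≤ m0) {μ : Measure α} {B : Set α}
    {c : ℝ≥0∞} (hB : ∀ A, MeasurableSet[m] A → μ (A ∩ B) ≤ c * μ A)
    {f : α → ℝ≥0∞} (hf : Measurable[m] f) :
    ∫⁻ a in B, f a ∂μ ≤ c * ∫⁻ a, f a ∂μ := by
  have htrim : (μ.restrict B).trim hm ≤ (c • μ).trim hm := by
    refine Measure.le_iff.2 fun A hA => ?_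
    rw [trim_measurableSet_eq hm hA, trim_measurableSet_eq hm hA,
      Measure.restrict_apply (hm A hA)]
    exact hB A hA
  calc ∫⁻ a in B, f a ∂μ = ∫⁻ a, f a ∂(μ.restrict B).trim hm := (lintegral_trim hm hf).symm
    _ ≤ ∫⁻ a, f a ∂(c • μ).trim hm := lintegral_mono' htrim le_rfl
    _ = c * ∫⁻ a, f a ∂μ := by rw [lintegral_trim hm hf, lintegral_smul_measure, smul_eq_mul]

namespace HistoryBounded

variable {Ω : Type*} {Δ : ℕ} (X : Fin Δ → Ω → ℕ)

abbrev history (i : Fin Δ) : MeasurableSpace Ω := ⨆ j ∈ Iio i, MeasurableSpace.comap (X j) ⊤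

def partialSum (k : ℕ) (ω : Ω) : ℕ := ∑ j with j.val < k, X j ω

theorem measurable_history {i j : Fin Δ} (hji : j < i) : Measurable[history X i] (X j) :=
  (comap_measurable (X j)).mono (le_iSup₂_of_le j (mem_Iio.2 hji) le_rfl) le_rfl

theorem measurable_partialSum {k : ℕ} {i : Fin Δ} (hki : k ≤ i) :
    Measurable[history X i] (partialSum X k) :=
  Finset.measurable_sum _ fun _ hj =>
    measurable_history X (Fin.lt_def.2 ((mem_filter.1 hj).2.trans_le hki))

theorem partialSum_zero : partialSum X 0 = 0 := by
  ext ω; simp [partialSum]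

theorem filter_val_lt_succ (i : Fin Δ) :
    univ.filter (fun j : Fin Δ => j.val < i.val + 1) = insert i (univ.filter (·.val < i.val)) := by
  ext j; simp only [mem_filter, mem_univ, true_and, mem_insert, Fin.ext_iff]; omega

theorem partialSum_succ (i : Fin Δ) (ω : Ω) :
    partialSum X (i.val + 1) ω = partialSum X i ω + X i ω := by
  rw [partialSum, filter_val_lt_succ, sum_insert (by simp), add_comm]; rfl

theorem two_pow_partialSum_succ (hX : ∀ i ω, X i ω ≤ 1) (i : Fin Δ) (ω : Ω) :
    (2 : ℝ≥0∞) ^ partialSum X (i.val + 1) ω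
      = 2 ^ partialSum X i ω + {ω | X i ω = 1}.indicator (fun ω => 2 ^ partialSum X i ω) ω := by
  rw [partialSum_succ, pow_add]
  obtain h | h := Nat.le_one_iff_eq_zero_or_eq_one.1 (hX i ω) <;> simp [h, mul_two]

variable [MeasurableSpace Ω] (P : Measure Ω)

theorem history_le (hmeas : ∀ i, Measurable (X i)) (i : Fin Δ) :
    history X i ≤ ‹MeasurableSpace Ω› :=
  iSup₂_le fun j _ => (hmeas j).comap_le

theorem lintegral_two_pow_partialSum_succ_le (hmeas : ∀ i, Measurable (X i))
    (hX : ∀ i ω, X i ω ≤ 1) (i : Fin Δ) {p : ℝ≥0∞}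
    (hcond : ∀ A, MeasurableSet[history X i] A → P (A ∩ {ω | X i ω = 1}) ≤ p * P A) :
    ∫⁻ ω, 2 ^ partialSum X (i.val + 1) ω ∂P ≤ (1 + p) * ∫⁻ ω, 2 ^ partialSum X i ω ∂P := by
  have hf : Measurable[history X i] fun ω => (2 : ℝ≥0∞) ^ partialSum X i ω :=
    Measurable.of_discrete.comp (measurable_partialSum X le_rfl)
  have hB : MeasurableSet {ω | X i ω = 1} := hmeas i (measurableSet_singleton 1)
  simp_rw [two_pow_partialSum_succ X hX]
  rw [lintegral_add_left (hf.mono (history_le X hmeas i) le_rfl), lintegral_indicator hB,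
    add_mul, one_mul]
  gcongr
  exact setLIntegral_le_mul_lintegral_of_measure_inter_le (history_le X hmeas i) hcond hf

theorem lintegral_two_pow_partialSum_le (hmeas : ∀ i, Measurable (X i))
    (hX : ∀ i ω, X i ω ≤ 1) (p : Fin Δ → ℝ≥0∞)
    (hcond : ∀ i A, MeasurableSet[history X i] A → P (A ∩ {ω | X i ω = 1}) ≤ p i * P A) :
    ∀ k ≤ Δ, ∫⁻ ω, 2 ^ partialSum X k ω ∂P ≤ (∏ i with i.val < k, (1 + p i)) * P Set.univ
  | 0, _ => by simp [partialSum_zero]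
  | k + 1, hk => by
    let i : Fin Δ := ⟨k, hk⟩
    calc ∫⁻ ω, 2 ^ partialSum X (i.val + 1) ω ∂P
        ≤ (1 + p i) * ∫⁻ ω, 2 ^ partialSum X i ω ∂P :=
          lintegral_two_pow_partialSum_succ_le X P hmeas hX i (hcond i)
      _ ≤ (1 + p i) * ((∏ j with j.val < i.val, (1 + p j)) * P Set.univ) := by
          gcongr; exact lintegral_two_pow_partialSum_le hmeas hX p hcond k (Nat.le_of_succ_le hk)
      _ = (∏ j with j.val < i.val + 1, (1 + p j)) * P Set.univ := by
          rw [filter_val_lt_succ, prod_insert (by simp), mul_assoc]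

theorem lintegral_two_pow_sum_le (hmeas : ∀ i, Measurable (X i))
    (hX : ∀ i ω, X i ω ≤ 1) (p : Fin Δ → ℝ≥0∞)
    (hcond : ∀ i A, MeasurableSet[history X i] A → P (A ∩ {ω | X i ω = 1}) ≤ p i * P A) :
    ∫⁻ ω, 2 ^ ∑ i, X i ω ∂P ≤ (∏ i, (1 + p i)) * P Set.univ := by
  simpa [partialSum] using lintegral_two_pow_partialSum_le X P hmeas hX p hcond Δ le_rfl

end HistoryBounded

theorem sum_inv_sub_eq_harmonic (Δ : ℕ) : ∑ i : Fin Δ, ((Δ : ℝ) - i)⁻¹ = harmonic Δ := by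
  rw [Fin.sum_univ_eq_sum_range (fun m => ((Δ : ℝ) - m)⁻¹), ← sum_range_reflect, harmonic]
  push_cast
  refine sum_congr rfl fun m hm => ?_
  have hm : 1 + m ≤ Δ := by have := mem_range.1 hm; omega
  rw [Nat.sub_sub, Nat.cast_sub hm]
  push_cast; ring_nf

theorem prod_one_add_three_div_le (n Δ : ℕ) (hn : 1 ≤ n) (hΔn : Δ ≤ n) :
    ∏ i : Fin Δ, (1 + ENNReal.ofReal (3 / ((Δ : ℝ) - i)))
      ≤ ENNReal.ofReal (Real.exp 3 * (n : ℝ) ^ 3) := by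
  have hpos : ∀ i : Fin Δ, 0 ≤ 3 / ((Δ : ℝ) - i) := fun i => by
    have : (i : ℝ) < Δ := by exact_mod_cast i.isLt
    exact div_nonneg (by norm_num) (by linarith)
  have hlog : Real.log Δ ≤ Real.log n := by
    rcases Nat.eq_zero_or_pos Δ with rfl | hΔ
    · simpa using Real.log_natCast_nonneg n
    · exact Real.log_le_log (by exact_mod_cast hΔ) (by exact_mod_cast hΔn)
  have hsum : ∑ i : Fin Δ, 3 / ((Δ : ℝ) - i) ≤ 3 + Real.log (n ^ 3) := by
    simp_rw [div_eq_mul_inv, ← mul_sum, sum_inv_sub_eq_harmonic, Real.log_pow]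
    have := harmonic_le_one_add_log Δ
    push_cast
    linarith
  calc ∏ i : Fin Δ, (1 + ENNReal.ofReal (3 / ((Δ : ℝ) - i)))
      = ENNReal.ofReal (∏ i : Fin Δ, (1 + 3 / ((Δ : ℝ) - i))) := by
        rw [ENNReal.ofReal_prod_of_nonneg fun i _ => by linarith [hpos i]]
        simp_rw [ENNReal.ofReal_add zero_le_one (hpos _), ENNReal.ofReal_one]
    _ ≤ ENNReal.ofReal (Real.exp (3 + Real.log (n ^ 3))) := by
        gcongr
        exact (Real.prod_one_add_le_exp_sum _ hpos).trans (Real.exp_le_exp.2 hsum)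
    _ = ENNReal.ofReal (Real.exp 3 * (n : ℝ) ^ 3) := by
        rw [Real.exp_add, Real.exp_log (by positivity)]

theorem exp_three_mul_pow_six_le (n : ℝ) (hn : 2 ≤ n) :
    Real.exp 3 * n ^ 6 ≤ 2 ^ (30 * Real.log n) := by
  have hlog2 := Real.log_two_gt_d9
  have hlogn : Real.log 2 ≤ Real.log n := Real.log_le_log two_pos hn
  rw [Real.rpow_def_of_pos two_pos, ← Real.exp_log (by positivity : 0 < n ^ 6), ← Real.exp_add,
    Real.log_pow]
  gcongr
  push_cast
  nlinarith

theorem ofReal_two_rpow_mul_meas_ge_le_lintegral {Ω : Type*} [MeasurableSpace Ω] (P : Measure Ω)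
    {s : Ω → ℕ} (hs : Measurable s) (t : ℝ) :
    ENNReal.ofReal (2 ^ t) * P {ω | t ≤ s ω} ≤ ∫⁻ ω, 2 ^ s ω ∂P := by
  refine le_trans ?_
    (mul_meas_ge_le_lintegral (Measurable.of_discrete.comp hs) (ENNReal.ofReal (2 ^ t)))
  gcongr with ω
  intro hω
  show ENNReal.ofReal (2 ^ t) ≤ 2 ^ s ω
  calc ENNReal.ofReal (2 ^ t) ≤ ENNReal.ofReal (2 ^ (s ω : ℝ)) := by
        gcongr; norm_num
    _ = 2 ^ s ω := by rw [Real.rpow_natCast, ENNReal.ofReal_pow zero_le_two, ENNReal.ofReal_ofNat]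

theorem sum_of_history_bounded_bernoullis_general
    {Ω : Type*} [MeasurableSpace Ω] (P : Measure Ω) [IsProbabilityMeasure P]
    (n Δ : ℕ) (hn : 2 ≤ n) (hΔn : Δ ≤ n)
    (X : Fin Δ → Ω → ℕ) (hmeas : ∀ i, Measurable (X i))
    (hval : ∀ i, ∀ ω, X i ω ∈ ({0, 1} : Set ℕ))
    (hcond : ∀ i : Fin Δ, ∀ A : Set Ω,
      MeasurableSet[⨆ j ∈ Finset.Iio i, MeasurableSpace.comap (X j) ⊤] A →
      P (A ∩ {ω | X i ω = 1}) ≤ ENNReal.ofReal (3 / ((Δ : ℝ) - i.val)) * P A) :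
    (P {ω | 30 * Real.log n ≤ ∑ i, (X i ω : ℝ)}).toReal ≤ 1 / (n : ℝ) ^ 3 := by
  have hX : ∀ i ω, X i ω ≤ 1 := fun i ω =>
    (hval i ω).elim (fun h => h.trans_le zero_le_one) fun h => (Set.mem_singleton_iff.1 h).le
  have hn' : (2 : ℝ) ≤ n := by exact_mod_cast hn
  set t := 30 * Real.log n
  have hmoment : ∫⁻ ω, 2 ^ ∑ i, X i ω ∂P ≤ ENNReal.ofReal (Real.exp 3 * (n : ℝ) ^ 3) :=
    calc _ ≤ (∏ i : Fin Δ, (1 + ENNReal.ofReal (3 / ((Δ : ℝ) - i)))) * P Set.univ :=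
          HistoryBounded.lintegral_two_pow_sum_le X P hmeas hX _ hcond
      _ ≤ _ := by
          rw [measure_univ, mul_one]
          exact prod_one_add_three_div_le n Δ (by omega) hΔn
  have hchernoff :=
    ofReal_two_rpow_mul_meas_ge_le_lintegral P (measurable_sum univ fun i _ => hmeas i) t
  simp only [Nat.cast_sum] at hchernoff
  have hnum : Real.exp 3 * (n : ℝ) ^ 3 ≤ 2 ^ t * (1 / (n : ℝ) ^ 3) := by
    rw [mul_one_div, le_div_iff₀ (by positivity)]
    linarith [exp_three_mul_pow_six_le n hn']
  have hbound : ENNReal.ofReal (2 ^ t) * P {ω | t ≤ ∑ i, (X i ω : ℝ)}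
      ≤ ENNReal.ofReal (2 ^ t) * ENNReal.ofReal (1 / (n : ℝ) ^ 3) := by
    rw [← ENNReal.ofReal_mul (by positivity)]
    exact hchernoff.trans (hmoment.trans (ENNReal.ofReal_le_ofReal hnum))
  exact ENNReal.toReal_le_of_le_ofReal (by positivity) <|
    (ENNReal.mul_le_mul_iff_right (ENNReal.ofReal_pos.2 (by positivity)).ne' ofReal_ne_top).1 hbound

/-- Let `X₁, …, X_Δ` be `{0,1}`-valued random variables (possibly correlated)
such that for each `i`, the conditional probability of `{Xᵢ = 1}` given the
history `X₁, …, X_{i-1}` is almost surely at most `3/(Δ - i + 1)` (stated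
equivalently: `P(A ∩ {Xᵢ = 1}) ≤ 3/(Δ-i+1) · P(A)` for every event `A`
measurable with respect to the σ-algebra generated by `X₁, …, X_{i-1}`).
If `2 ≤ n` and `Δ ≤ n`, then `Pr(Σᵢ Xᵢ ≥ 30 ln n) ≤ 1/n³`.

Here `i : Fin Δ` corresponds to the `(i+1)`-st variable, so the bound
`3/(Δ - i + 1)` reads `3/(Δ - i.val)`. -/
theorem sum_of_history_bounded_bernoullis
    {Ω : Type*} [MeasurableSpace Ω] (P : Measure Ω) [IsProbabilityMeasure P]
    (n Δ : ℕ) (hn : 2 ≤ n) (hΔ : 1 ≤ Δ) (hΔn : Δ ≤ n)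
    (X : Fin Δ → Ω → ℕ) (hmeas : ∀ i, Measurable (X i))
    (hval : ∀ i, ∀ ω, X i ω ∈ ({0, 1} : Set ℕ))
    (hcond : ∀ i : Fin Δ, ∀ A : Set Ω,
      MeasurableSet[⨆ j ∈ Finset.Iio i, MeasurableSpace.comap (X j) ⊤] A →
      P (A ∩ {ω | X i ω = 1}) ≤ ENNReal.ofReal (3 / ((Δ : ℝ) - i.val)) * P A) :
    (P {ω | 30 * Real.log n ≤ ∑ i, (X i ω : ℝ)}).toReal ≤ 1 / (n : ℝ) ^ 3 :=
  sum_of_history_bounded_bernoullis_general P n Δ hn hΔn X hmeas hval hcond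
end

section
/- Let n and Δ be positive integers with n ≤ Δ, let μ, p ∈ [0, 1], let X₁, …, Xₙ be {0,1}-valued random variables (possibly correlated) with Pr(X_u = 1) ≤ μ for every u ∈ [n], and let Z₁, …, Zₙ be mutually independent Bernoulli(p) random variables that are independent of the tuple (X₁, …, Xₙ). Then for every integer y ≥ 1, Pr( Σ_{u=1}^{n} X_u · Z_u ≥ y ) ≤ C(n, y) · μ · p^y, where C(n, y) denotes the binomial coefficient n choose y. -/
/-!
If `∑ᵤ Xᵤ Zᵤ ≥ y`, some `y`-subset `S` of `[n]` has `Xᵤ = Zᵤ = 1` for all `u ∈ S`. For a fixed `S`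
this event lies in `{X_{u₀} = 1} ∩ {Zᵤ = 1 for all u ∈ S}` for any `u₀ ∈ S`; by independence of `X`
and `Z` and mutual independence of the `Zᵤ` its probability is at most `μ pʸ`. A union bound over
the `C(n, y)` subsets finishes the proof.
-/

open MeasureTheory ProbabilityTheory Finset

theorem sum_mul_eq_card_filter {ι R : Type*} [Fintype ι] [Semiring R] {f g : ι → ℕ}
    (hf : ∀ u, f u ∈ ({0, 1} : Set ℕ)) (hg : ∀ u, g u ∈ ({0, 1} : Set ℕ)) :
    ∑ u, (f u : R) * g u = #{u | f u = 1 ∧ g u = 1} := by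
  rw [natCast_card_filter]
  refine sum_congr rfl fun u _ => ?_
  rcases hf u with hfu | hfu <;> rcases hg u with hgu | hgu <;> simp_all

theorem measure_setOf_forall_mem_le_mul_prod {Ω ι β γ : Type*} [MeasurableSpace Ω]
    [MeasurableSpace β] [MeasurableSpace γ] {P : Measure Ω} {X : ι → Ω → β} {Z : ι → Ω → γ}
    (hZ : iIndepFun Z P) (hXZ : IndepFun (fun ω u => X u ω) (fun ω u => Z u ω) P)
    {A : Set β} {B : Set γ} (hA : MeasurableSet A) (hB : MeasurableSet B)
    {S : Finset ι} {u₀ : ι} (hu₀ : u₀ ∈ S) :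
    P {ω | ∀ u ∈ S, X u ω ∈ A ∧ Z u ω ∈ B} ≤
      P {ω | X u₀ ω ∈ A} * ∏ u ∈ S, P {ω | Z u ω ∈ B} := by
  calc P {ω | ∀ u ∈ S, X u ω ∈ A ∧ Z u ω ∈ B}
      ≤ P ((fun ω u => X u ω) ⁻¹' ((fun f => f u₀) ⁻¹' A) ∩
          (fun ω u => Z u ω) ⁻¹' ⋂ u ∈ S, (fun g => g u) ⁻¹' B) :=
        measure_mono fun ω h => ⟨(h u₀ hu₀).1, Set.mem_iInter₂.2 fun u hu => (h u hu).2⟩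
    _ = P {ω | X u₀ ω ∈ A} * P (⋂ u ∈ S, Z u ⁻¹' B) := by
        rw [hXZ.measure_inter_preimage_eq_mul _ _ (measurable_pi_apply u₀ hA)
          (S.measurableSet_biInter fun u _ => measurable_pi_apply u hB), Set.preimage_iInter₂]
        rfl
    _ = P {ω | X u₀ ω ∈ A} * ∏ u ∈ S, P {ω | Z u ω ∈ B} :=
        congrArg _ (hZ.measure_inter_preimage_eq_mul S fun _ _ => hB)

theorem prob_sum_mul_indep_bernoulli_ge_general
    {Ω : Type*} [MeasurableSpace Ω] (P : Measure Ω) [IsProbabilityMeasure P]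
    (n : ℕ)
    (μ p : ℝ) (hp : p ∈ Set.Icc (0 : ℝ) 1)
    (X Z : Fin n → Ω → ℕ)
    (hXval : ∀ u, ∀ ω, X u ω ∈ ({0, 1} : Set ℕ))
    (hZval : ∀ u, ∀ ω, Z u ω ∈ ({0, 1} : Set ℕ))
    (hXμ : ∀ u, (P {ω | X u ω = 1}).toReal ≤ μ)
    (hZp : ∀ u, (P {ω | Z u ω = 1}).toReal = p)
    (hZindep : iIndepFun Z P)
    (hZX : IndepFun (fun ω => (fun u => X u ω)) (fun ω => (fun u => Z u ω)) P)
    (y : ℕ) (hy : 1 ≤ y) :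
    (P {ω | (y : ℝ) ≤ ∑ u, (X u ω : ℝ) * (Z u ω : ℝ)}).toReal ≤
      (n.choose y : ℝ) * μ * p ^ y := by
  set E : Finset (Fin n) → Set Ω := fun S => {ω | ∀ u ∈ S, X u ω = 1 ∧ Z u ω = 1}
  have hcover : {ω | (y : ℝ) ≤ ∑ u, (X u ω : ℝ) * (Z u ω : ℝ)} ⊆
      ⋃ S ∈ powersetCard y univ, E S := by
    intro ω hω
    rw [Set.mem_ofPred_eq, sum_mul_eq_card_filter (hXval · ω) (hZval · ω), Nat.cast_le] at hω
    obtain ⟨S, hST, hcard⟩ := exists_subset_card_eq hω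
    exact Set.mem_biUnion (mem_powersetCard.2 ⟨subset_univ S, hcard⟩)
      fun u hu => (mem_filter.1 (hST hu)).2
  have hE : ∀ S ∈ powersetCard y univ, P.real (E S) ≤ μ * p ^ y := by
    intro S hS
    have hcard := (mem_powersetCard.1 hS).2
    obtain ⟨u₀, hu₀⟩ := card_pos.1 (hcard ▸ hy)
    have hle := measure_setOf_forall_mem_le_mul_prod hZindep hZX
      (measurableSet_singleton 1) (measurableSet_singleton 1) hu₀
    calc P.real (E S)
        ≤ (P {ω | X u₀ ω = 1}).toReal * ∏ u ∈ S, (P {ω | Z u ω = 1}).toReal := by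
          rw [← ENNReal.toReal_prod, ← ENNReal.toReal_mul]
          exact ENNReal.toReal_mono
            (ENNReal.mul_ne_top (measure_ne_top _ _) (ENNReal.prod_ne_top fun _ _ => measure_ne_top _ _)) hle
      _ ≤ μ * p ^ y := by
          rw [prod_congr rfl fun u _ => hZp u, prod_const, hcard]
          exact mul_le_mul_of_nonneg_right (hXμ u₀) (pow_nonneg hp.1 y)
  calc P.real {ω | (y : ℝ) ≤ ∑ u, (X u ω : ℝ) * (Z u ω : ℝ)}
      ≤ ∑ S ∈ powersetCard y univ, P.real (E S) :=
        (measureReal_mono hcover (measure_ne_top _ _)).trans (measureReal_biUnion_finset_le _ _)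
    _ ≤ ∑ S ∈ powersetCard y univ, μ * p ^ y := sum_le_sum hE
    _ = (n.choose y : ℝ) * μ * p ^ y := by
        rw [sum_const, card_powersetCard, card_univ, Fintype.card_fin, nsmul_eq_mul, mul_assoc]

/-- Let `X₁, …, Xₙ` be `{0,1}`-valued random variables (possibly correlated)
with `Pr(X_u = 1) ≤ μ` for each `u`, and let `Z₁, …, Zₙ` be mutually independent
Bernoulli(`p`) random variables, independent of the tuple `(X₁, …, Xₙ)`.
Then for every integer `y ≥ 1`, `Pr(Σᵤ Xᵤ·Zᵤ ≥ y) ≤ (n choose y) · μ · p^y`. -/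
theorem prob_sum_mul_indep_bernoulli_ge
    {Ω : Type*} [MeasurableSpace Ω] (P : Measure Ω) [IsProbabilityMeasure P]
    (n Δ : ℕ) (hn : 1 ≤ n) (hΔ : 1 ≤ Δ) (hnΔ : n ≤ Δ)
    (μ p : ℝ) (hμ : μ ∈ Set.Icc (0 : ℝ) 1) (hp : p ∈ Set.Icc (0 : ℝ) 1)
    (X Z : Fin n → Ω → ℕ)
    (hXmeas : ∀ u, Measurable (X u)) (hZmeas : ∀ u, Measurable (Z u))
    (hXval : ∀ u, ∀ ω, X u ω ∈ ({0, 1} : Set ℕ))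
    (hZval : ∀ u, ∀ ω, Z u ω ∈ ({0, 1} : Set ℕ))
    (hXμ : ∀ u, (P {ω | X u ω = 1}).toReal ≤ μ)
    (hZp : ∀ u, (P {ω | Z u ω = 1}).toReal = p)
    (hZindep : iIndepFun Z P)
    (hZX : IndepFun (fun ω => (fun u => X u ω)) (fun ω => (fun u => Z u ω)) P)
    (y : ℕ) (hy : 1 ≤ y) :
    (P {ω | (y : ℝ) ≤ ∑ u, (X u ω : ℝ) * (Z u ω : ℝ)}).toReal ≤
      (n.choose y : ℝ) * μ * p ^ y :=
  prob_sum_mul_indep_bernoulli_ge_general P n μ p hp X Z hXval hZval hXμ hZp hZindep hZX y hy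
end

section
/- Let Δ and n be integers with 3 ≤ n and 1 ≤ Δ ≤ n, and for i ∈ {1, …, Δ} set μᵢ := 3/(Δ − i + 1). Let Y₁, …, Y_Δ be mutually independent non-negative integer-valued random variables such that for every i: E[Yᵢ] ≤ μᵢ, and for every integer y ≥ 1, Pr(Yᵢ ≥ y) ≤ 15 · e^{−y} · μᵢ. Then Pr( Σ_{i=1}^{Δ} Yᵢ ≥ 540 ln n ) ≤ n^{−30}. -/
/-!
Chernoff bound at `t = 1/2`. Writing `e^{W/2}` as `1 + ∑ₖ (e^{(k+1)/2} - e^{k/2}) 𝟙[W ≥ k+1]`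
turns the tail bound `Pr(W ≥ y) ≤ c e^{-y}` into `E[e^{W/2}] ≤ 1 + c e^{-1/2} ≤ e^{c}`.
By independence, `S = ∑ᵢ Yᵢ` has
`E[e^{S/2}] ≤ exp (15 ∑ᵢ μᵢ) = exp (45 H_Δ) ≤ exp (45 (1 + ln n))`, and Markov's inequality
gives `Pr(S ≥ 540 ln n) ≤ exp (45 + 45 ln n - 270 ln n) ≤ n^{-30}`.
-/

open MeasureTheory ProbabilityTheory Finset Real
open scoped ENNReal

theorem harmonic_mono : Monotone harmonic := fun _ _ hmn =>
  sum_le_sum_of_subset_of_nonneg (range_subset_range.mpr hmn) fun _ _ _ => by positivity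

theorem sum_fin_inv_sub_eq_harmonic (n : ℕ) :
    ∑ i : Fin n, ((n : ℝ) - i)⁻¹ = harmonic n := by
  rw [Fin.sum_univ_eq_sum_range (fun i => ((n : ℝ) - i)⁻¹), ← sum_range_reflect]
  push_cast [harmonic]
  refine sum_congr rfl fun i hi => ?_
  rw [mem_range] at hi
  rw [Nat.cast_sub (by omega), Nat.cast_sub (by omega)]
  push_cast
  ring_nf

theorem sum_div_sub_le_mul_one_add_log {m n : ℕ} (hmn : m ≤ n) {a : ℝ} (ha : 0 ≤ a) :
    ∑ i : Fin m, a / ((m : ℝ) - i) ≤ a * (1 + log n) := by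
  simp only [div_eq_mul_inv, ← mul_sum, sum_fin_inv_sub_eq_harmonic]
  exact mul_le_mul_of_nonneg_left
    ((Rat.cast_le.mpr (harmonic_mono hmn)).trans (harmonic_le_one_add_log n)) ha

theorem exp_half_succ_sub_mul_exp_neg_succ (k : ℕ) :
    (exp (1 / 2 * ↑(k + 1)) - exp (1 / 2 * k)) * exp (-↑(k + 1)) =
      (1 - exp (-(1 / 2))) * exp (-(1 / 2)) ^ (k + 1) := by
  rw [one_sub_mul, ← pow_succ', ← exp_nat_mul, ← exp_nat_mul, sub_mul, ← exp_add, ← exp_add]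
  congr 2 <;> push_cast <;> ring

theorem hasSum_one_sub_mul_pow_succ {r : ℝ} (hr0 : 0 ≤ r) (hr1 : r < 1) :
    HasSum (fun k : ℕ => (1 - r) * r ^ (k + 1)) r := by
  have h := (hasSum_geometric_of_lt_one hr0 hr1).mul_left ((1 - r) * r)
  rw [show (1 - r) * r * (1 - r)⁻¹ = r by field_simp [(sub_pos.mpr hr1).ne']] at h
  simpa only [pow_succ', ← mul_assoc] using h

theorem ENNReal.eq_add_sum_range_tsub {f : ℕ → ℝ≥0∞} (hf : Monotone f) (n : ℕ) :
    f n = f 0 + ∑ k ∈ range n, (f (k + 1) - f k) := by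
  induction n with
  | zero => simp
  | succ n ih => rw [sum_range_succ, ← add_assoc, ← ih, add_tsub_cancel_of_le (hf n.le_succ)]

section TailBounds

variable {Ω : Type*} [MeasurableSpace Ω]

theorem lintegral_comp_nat_eq_add_tsum (μ : Measure Ω) {W : Ω → ℕ} (hW : Measurable W)
    {f : ℕ → ℝ≥0∞} (hf : Monotone f) :
    ∫⁻ ω, f (W ω) ∂μ = f 0 * μ Set.univ + ∑' k, (f (k + 1) - f k) * μ {ω | k + 1 ≤ W ω} := by
  have hset : ∀ k : ℕ, MeasurableSet {ω | k + 1 ≤ W ω} := fun _ => hW measurableSet_Ici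
  have layer : ∀ ω, f (W ω) =
      f 0 + ∑' k, {ω | k + 1 ≤ W ω}.indicator (fun _ => f (k + 1) - f k) ω := by
    intro ω
    rw [tsum_eq_sum (s := range (W ω)) fun k hk => by
      rw [Set.indicator_of_notMem]; simp at hk ⊢; omega]
    rw [sum_congr rfl fun k hk => Set.indicator_of_mem (by simp at hk ⊢; omega) _]
    exact ENNReal.eq_add_sum_range_tsub hf _
  simp_rw [layer]
  rw [lintegral_add_left measurable_const, lintegral_tsum, lintegral_const]
  · simp_rw [lintegral_indicator_const (hset _)]
  · exact fun k => aemeasurable_const.indicator (hset k)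

variable (μ : Measure Ω) [IsProbabilityMeasure μ] {W : Ω → ℕ} {c : ℝ}

theorem lintegral_exp_half_le_of_tail (hW : Measurable W) (hc : 0 ≤ c)
    (htail : ∀ y : ℕ, 1 ≤ y → μ.real {ω | y ≤ W ω} ≤ c * exp (-y)) :
    ∫⁻ ω, ENNReal.ofReal (exp (1 / 2 * W ω)) ∂μ ≤ ENNReal.ofReal (1 + c * exp (-(1 / 2))) := by
  set r := exp (-(1 / 2)) with hr
  have hr0 : 0 ≤ r := (exp_pos _).le
  have hr1 : r < 1 := exp_lt_one_iff.mpr (by norm_num)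
  have hmono : Monotone fun k : ℕ => ENNReal.ofReal (exp (1 / 2 * k)) := fun _ _ hab =>
    ENNReal.ofReal_le_ofReal (exp_le_exp.mpr (by gcongr))
  have hterm : ∀ k : ℕ,
      (ENNReal.ofReal (exp (1 / 2 * ↑(k + 1))) - ENNReal.ofReal (exp (1 / 2 * k))) *
        μ {ω | k + 1 ≤ W ω} ≤ ENNReal.ofReal (c * ((1 - r) * r ^ (k + 1))) := by
    intro k
    have hμ : μ {ω | k + 1 ≤ W ω} ≤ ENNReal.ofReal (c * exp (-↑(k + 1))) :=
      (ENNReal.le_ofReal_iff_toReal_le (measure_ne_top _ _) (by positivity)).mpr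
        (htail (k + 1) k.succ_pos)
    rw [← ENNReal.ofReal_sub _ (exp_pos _).le, hr, ← exp_half_succ_sub_mul_exp_neg_succ,
      mul_left_comm, ENNReal.ofReal_mul (sub_nonneg.mpr (exp_le_exp.mpr (by gcongr; simp)))]
    gcongr
  have hsum := (hasSum_one_sub_mul_pow_succ hr0 hr1).mul_left c
  rw [lintegral_comp_nat_eq_add_tsum μ hW hmono, ENNReal.ofReal_add zero_le_one (by positivity)]
  simp only [Nat.cast_zero, mul_zero, exp_zero, ENNReal.ofReal_one, measure_univ, mul_one]
  gcongr
  refine (ENNReal.tsum_le_tsum hterm).trans_eq ?_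
  rw [← ENNReal.ofReal_tsum_of_nonneg (fun _ => mul_nonneg hc
    (mul_nonneg (sub_nonneg.mpr hr1.le) (pow_nonneg hr0 _))) hsum.summable, hsum.tsum_eq]

theorem integrable_exp_half_of_tail (hW : Measurable W) (hc : 0 ≤ c)
    (htail : ∀ y : ℕ, 1 ≤ y → μ.real {ω | y ≤ W ω} ≤ c * exp (-y)) :
    Integrable (fun ω => exp (1 / 2 * W ω)) μ := by
  refine ⟨(measurable_from_nat.comp hW).const_mul _ |>.exp.aestronglyMeasurable, ?_⟩
  rw [hasFiniteIntegral_iff_ofReal (ae_of_all _ fun _ => (exp_pos _).le)]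
  exact (lintegral_exp_half_le_of_tail μ hW hc htail).trans_lt ENNReal.ofReal_lt_top

theorem mgf_half_le_of_tail (hW : Measurable W) (hc : 0 ≤ c)
    (htail : ∀ y : ℕ, 1 ≤ y → μ.real {ω | y ≤ W ω} ≤ c * exp (-y)) :
    mgf (fun ω => (W ω : ℝ)) μ (1 / 2) ≤ 1 + c * exp (-(1 / 2)) := by
  rw [mgf, integral_eq_lintegral_of_nonneg_ae (f := fun ω => exp (1 / 2 * W ω))
    (ae_of_all _ fun _ => (exp_pos _).le)
    ((measurable_from_nat.comp hW).const_mul _ |>.exp.aestronglyMeasurable)]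
  exact ENNReal.toReal_le_of_le_ofReal (by positivity)
    (lintegral_exp_half_le_of_tail μ hW hc htail)

end TailBounds

theorem ProbabilityTheory.iIndepFun.measure_sum_ge_le_exp_mul_prod_mgf {Ω ι : Type*}
    [MeasurableSpace Ω] [Fintype ι] {μ : Measure Ω} {X : ι → Ω → ℝ} (hindep : iIndepFun X μ)
    (hmeas : ∀ i, Measurable (X i)) {t : ℝ} (ht : 0 ≤ t)
    (hint : ∀ i, Integrable (fun ω => exp (t * X i ω)) μ) (ε : ℝ) :
    μ.real {ω | ε ≤ ∑ i, X i ω} ≤ exp (-t * ε) * ∏ i, mgf (X i) μ t := by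
  have := hindep.isProbabilityMeasure
  have h := measure_ge_le_exp_mul_mgf (X := ∑ i, X i) ε ht
    (hindep.integrable_exp_mul_sum (s := univ) hmeas fun i _ => hint i)
  simpa only [Finset.sum_apply, hindep.mgf_sum hmeas] using h

theorem sum_indep_exp_tail_vars_le_general
    {Ω : Type*} [MeasurableSpace Ω] (P : Measure Ω) [IsProbabilityMeasure P]
    (n Δ : ℕ) (hn : 3 ≤ n) (hΔn : Δ ≤ n)
    (Y : Fin Δ → Ω → ℕ) (hmeas : ∀ i, Measurable (Y i))
    (hindep : iIndepFun Y P)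
    (htail : ∀ i : Fin Δ, ∀ y : ℕ, 1 ≤ y →
      (P {ω | y ≤ Y i ω}).toReal ≤ 15 * Real.exp (-(y : ℝ)) * (3 / ((Δ : ℝ) - i.val))) :
    (P {ω | 540 * Real.log n ≤ ∑ i, (Y i ω : ℝ)}).toReal ≤ (n : ℝ) ^ (-(30 : ℝ)) := by
  set L := log n
  set c : Fin Δ → ℝ := fun i => 45 / ((Δ : ℝ) - i.val)
  have hc : ∀ i, 0 ≤ c i := fun i =>
    div_nonneg (by norm_num) (sub_nonneg.mpr (by exact_mod_cast i.isLt.le))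
  have htail' : ∀ i, ∀ y : ℕ, 1 ≤ y → P.real {ω | y ≤ Y i ω} ≤ c i * exp (-y) :=
    fun i y hy => (htail i y hy).trans_eq (by ring)
  have hmgf : ∀ i, mgf (fun ω => (Y i ω : ℝ)) P (1 / 2) ≤ 1 + c i := fun i =>
    (mgf_half_le_of_tail P (hmeas i) (hc i) (htail' i)).trans <| by
      gcongr; exact mul_le_of_le_one_right (hc i) (exp_le_one_iff.mpr (by norm_num))
  have hL : log 2 ≤ L := log_le_log two_pos (by exact_mod_cast (by omega : 2 ≤ n))
  calc P.real {ω | 540 * L ≤ ∑ i, (Y i ω : ℝ)}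
      ≤ exp (-(1 / 2) * (540 * L)) * ∏ i, mgf (fun ω => (Y i ω : ℝ)) P (1 / 2) :=
        (hindep.comp _ fun _ => measurable_from_nat).measure_sum_ge_le_exp_mul_prod_mgf
          (fun i => measurable_from_nat.comp (hmeas i)) (by norm_num)
          (fun i => integrable_exp_half_of_tail P (hmeas i) (hc i) (htail' i)) _
    _ ≤ exp (-(1 / 2) * (540 * L)) * exp (∑ i, c i) := by
        gcongr
        exact (prod_le_prod (fun _ _ => mgf_nonneg) fun i _ => hmgf i).trans
          (prod_one_add_le_exp_sum _ hc)
    _ ≤ exp (-(1 / 2) * (540 * L)) * exp (45 * (1 + L)) := by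
        gcongr; exact sum_div_sub_le_mul_one_add_log hΔn (by norm_num)
    _ ≤ exp (-30 * L) := by rw [← exp_add]; gcongr; linarith [log_two_gt_d9]
    _ = (n : ℝ) ^ (-(30 : ℝ)) := by
        rw [rpow_def_of_pos (by positivity)]; congr 1; ring

/-- Let `3 ≤ n`, `1 ≤ Δ ≤ n` and, for `i ∈ {1, …, Δ}`, set `μᵢ := 3/(Δ - i + 1)`.
If `Y₁, …, Y_Δ` are mutually independent non-negative integer-valued random
variables with `E[Yᵢ] ≤ μᵢ` and `Pr(Yᵢ ≥ y) ≤ 15·e^{-y}·μᵢ` for every integer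
`y ≥ 1`, then `Pr(Σᵢ Yᵢ ≥ 540 ln n) ≤ n^{-30}`.

Here `i : Fin Δ` corresponds to the `(i+1)`-st variable, so `μᵢ` reads
`3/(Δ - i.val)`. -/
theorem sum_indep_exp_tail_vars_le
    {Ω : Type*} [MeasurableSpace Ω] (P : Measure Ω) [IsProbabilityMeasure P]
    (n Δ : ℕ) (hn : 3 ≤ n) (hΔ : 1 ≤ Δ) (hΔn : Δ ≤ n)
    (Y : Fin Δ → Ω → ℕ) (hmeas : ∀ i, Measurable (Y i))
    (hindep : iIndepFun Y P)
    (hE : ∀ i : Fin Δ, (∫ ω, (Y i ω : ℝ) ∂P) ≤ 3 / ((Δ : ℝ) - i.val))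
    (htail : ∀ i : Fin Δ, ∀ y : ℕ, 1 ≤ y →
      (P {ω | y ≤ Y i ω}).toReal ≤ 15 * Real.exp (-(y : ℝ)) * (3 / ((Δ : ℝ) - i.val))) :
    (P {ω | 540 * Real.log n ≤ ∑ i, (Y i ω : ℝ)}).toReal ≤ (n : ℝ) ^ (-(30 : ℝ)) :=
  sum_indep_exp_tail_vars_le_general P n Δ hn hΔn Y hmeas hindep htail
end

section
/- There is an absolute constant C > 0 such that for every finite simple graph G = (V, E) on n ≥ 2 vertices with maximum degree Δ, there exists a partition of V into two sets L and R such that both the bipartite subgraph H consisting of all edges of G with one endpoint in L and one endpoint in R, and the complementary subgraph G \ H consisting of all remaining edges of G, have maximum degree at most Δ/2 + C · √Δ · log n. -/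
/-!
Colour the vertices by `σ : V → Bool` and put `L = σ⁻¹(true)`. Both the cross degree and the
same-side degree of `v` are at most `(deg v + |S_v σ|) / 2`, where `S_v σ` sums `±1` over the
neighbours of `v`. Counting over all `2 ^ n` colourings in place of a probability space, the
Chernoff argument with `cosh x ≤ exp (x ^ 2 / 2)` shows that fewer than `2 ^ n / n` colourings
have `|S_v σ| > 4 √Δ log n`, so a union bound over the `n` vertices leaves a colouring that is
good everywhere; this gives the constant `C = 2`.
-/

open Finset Real

variable {V : Type*}

def signSum (s : Finset V) (σ : V → Bool) : ℝ := ∑ w ∈ s, if σ w then 1 else -1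

lemma card_filter_eq_le_half_card_add_abs_signSum (s : Finset V) (σ : V → Bool) (b : Bool) :
    (#{w ∈ s | σ w = b} : ℝ) ≤ (#s + |signSum s σ|) / 2 := by
  have hsplit : (#{w ∈ s | σ w = true} : ℝ) + #{w ∈ s | ¬σ w = true} = #s := by
    exact_mod_cast card_filter_add_card_filter_not (s := s) (fun w => σ w = true)
  have hsum : signSum s σ = #{w ∈ s | σ w = true} - #{w ∈ s | ¬σ w = true} := by
    simp [signSum, sum_ite, sub_eq_add_neg]
  cases b
  · simp only [Bool.not_eq_true] at hsplit hsum
    linarith [neg_abs_le (signSum s σ)]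
  · linarith [le_abs_self (signSum s σ)]

lemma sum_exp_mul_signSum_le [Fintype V] [DecidableEq V] (s : Finset V) (l : ℝ) :
    ∑ σ : V → Bool, exp (l * signSum s σ) ≤ 2 ^ Fintype.card V * exp (#s * (l ^ 2 / 2)) := by
  set f : V → Bool → ℝ := fun w b => if w ∈ s then exp (l * if b then 1 else -1) else 1
  have hprod (σ : V → Bool) : exp (l * signSum s σ) = ∏ w, f w (σ w) := by
    rw [signSum, mul_sum, exp_sum, prod_ite_mem, univ_inter]
  have hfactor (w : V) : ∑ b, f w b ≤ 2 * if w ∈ s then exp (l ^ 2 / 2) else 1 := by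
    have := cosh_le_exp_half_sq l
    rw [cosh_eq] at this
    split_ifs with hw
    · simp only [f, hw, if_true, Fintype.sum_bool, Bool.false_eq_true, if_false, mul_one, mul_neg]
      linarith
    · simp [f, hw]
  calc ∑ σ : V → Bool, exp (l * signSum s σ)
      = ∏ w, ∑ b, f w b := by simp only [hprod, Fintype.prod_sum]
    _ ≤ ∏ w : V, 2 * if w ∈ s then exp (l ^ 2 / 2) else 1 :=
        prod_le_prod (fun w _ => sum_nonneg fun b _ => by positivity) fun w _ => hfactor w
    _ = 2 ^ Fintype.card V * exp (#s * (l ^ 2 / 2)) := by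
        rw [prod_mul_distrib, prod_const, prod_ite_mem, univ_inter, prod_const, ← exp_nat_mul,
          card_univ]

lemma card_le_abs_signSum_le_exp [Fintype V] [DecidableEq V] (s : Finset V) {l : ℝ} (hl : 0 ≤ l)
    (a : ℝ) :
    (#{σ : V → Bool | a ≤ |signSum s σ|} : ℝ) ≤
      2 * 2 ^ Fintype.card V * exp (#s * (l ^ 2 / 2) - l * a) := by
  have hmarkov (σ : V → Bool) (hσ : a ≤ |signSum s σ|) :
      1 ≤ exp (l * signSum s σ - l * a) + exp (-l * signSum s σ - l * a) := by
    rcases le_abs'.mp hσ with h | h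
    · have : 1 ≤ exp (-l * signSum s σ - l * a) := one_le_exp (by nlinarith)
      linarith [exp_pos (l * signSum s σ - l * a)]
    · have : 1 ≤ exp (l * signSum s σ - l * a) := one_le_exp (by nlinarith)
      linarith [exp_pos (-l * signSum s σ - l * a)]
  calc (#{σ : V → Bool | a ≤ |signSum s σ|} : ℝ)
      ≤ ∑ σ ∈ {σ : V → Bool | a ≤ |signSum s σ|},
          (exp (l * signSum s σ - l * a) + exp (-l * signSum s σ - l * a)) := by
        simpa using card_nsmul_le_sum _ _ 1 fun σ hσ => hmarkov σ (mem_filter.mp hσ).2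
    _ ≤ ∑ σ : V → Bool, (exp (l * signSum s σ - l * a) + exp (-l * signSum s σ - l * a)) :=
        sum_le_sum_of_subset_of_nonneg (filter_subset _ _) fun _ _ _ => by positivity
    _ = (∑ σ : V → Bool, exp (l * signSum s σ) + ∑ σ : V → Bool, exp (-l * signSum s σ)) *
          exp (-(l * a)) := by
        simp only [sub_eq_add_neg, exp_add, sum_add_distrib, add_mul, sum_mul]
    _ ≤ (2 ^ Fintype.card V * exp (#s * (l ^ 2 / 2)) +
          2 ^ Fintype.card V * exp (#s * ((-l) ^ 2 / 2))) * exp (-(l * a)) := by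
        gcongr <;> exact sum_exp_mul_signSum_le s _
    _ = 2 * 2 ^ Fintype.card V * exp (#s * (l ^ 2 / 2) - l * a) := by
        rw [neg_sq, sub_eq_add_neg, exp_add]; ring

lemma card_le_abs_signSum_le_exp_neg_sq [Fintype V] [DecidableEq V] (s : Finset V) {D : ℝ}
    (hD : 0 < D) (hs : #s ≤ D) {a : ℝ} (ha : 0 ≤ a) :
    (#{σ : V → Bool | a ≤ |signSum s σ|} : ℝ) ≤
      2 * 2 ^ Fintype.card V * exp (-(a ^ 2 / (2 * D))) := by
  refine (card_le_abs_signSum_le_exp s (div_nonneg ha hD.le) a).trans ?_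
  gcongr
  calc (#s : ℝ) * ((a / D) ^ 2 / 2) - a / D * a ≤ D * ((a / D) ^ 2 / 2) - a / D * a := by gcongr
    _ = -(a ^ 2 / (2 * D)) := by field_simp; ring

lemma exists_forall_not_of_sum_card_filter_lt {ι α : Type*} [Fintype α] [DecidableEq α]
    (s : Finset ι) (P : ι → α → Prop) [∀ i, DecidablePred (P i)]
    (h : ∑ i ∈ s, #{x | P i x} < Fintype.card α) : ∃ x, ∀ i ∈ s, ¬P i x := by
  by_contra! hall
  refine (card_biUnion_le.trans_lt h).not_ge (card_le_card fun x _ => ?_)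
  obtain ⟨i, hi, hx⟩ := hall x
  exact mem_biUnion.mpr ⟨i, hi, mem_filter.mpr ⟨mem_univ x, hx⟩⟩

lemma mul_exp_neg_eight_mul_log_sq_lt {x : ℝ} (hx : 2 ≤ x) :
    x * exp (-(8 * log x ^ 2)) < 1 / 2 := by
  have hx0 : 0 < x := by linarith
  have hlog : log 2 ≤ log x := log_le_log two_pos hx
  have hlt : log 2 + log x < 8 * log x ^ 2 := by nlinarith [log_two_gt_d9]
  calc x * exp (-(8 * log x ^ 2)) < x * exp (-(log 2 + log x)) := by gcongr
    _ = 1 / 2 := by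
      rw [exp_neg, exp_add, exp_log two_pos, exp_log hx0]; field_simp

lemma card_lt_abs_signSum_neighborFinset_lt [Fintype V] [DecidableEq V] (G : SimpleGraph V)
    [DecidableRel G.Adj] (hn : 2 ≤ Fintype.card V) (v : V) :
    (#{σ : V → Bool |
        4 * √G.maxDegree * log (Fintype.card V) < |signSum (G.neighborFinset v) σ|} : ℝ) <
      2 ^ Fintype.card V / Fintype.card V := by
  have hn2 : (2 : ℝ) ≤ Fintype.card V := by exact_mod_cast hn
  have ha : 0 ≤ 4 * √G.maxDegree * log (Fintype.card V) := by
    have := log_nonneg (by linarith : (1 : ℝ) ≤ Fintype.card V); positivity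
  rcases (G.neighborFinset v).eq_empty_or_nonempty with hN | hN
  · rw [filter_eq_empty_iff.mpr fun σ _ => by simp [hN, signSum, ha.not_gt], card_empty,
      Nat.cast_zero]
    positivity
  have hdeg : (#(G.neighborFinset v) : ℝ) ≤ G.maxDegree := by
    exact_mod_cast (G.card_neighborFinset_eq_degree v).trans_le (G.degree_le_maxDegree v)
  have hΔ : (0 : ℝ) < G.maxDegree := lt_of_lt_of_le (by exact_mod_cast hN.card_pos) hdeg
  have hexp : (4 * √G.maxDegree * log (Fintype.card V)) ^ 2 / (2 * G.maxDegree) =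
      8 * log (Fintype.card V) ^ 2 := by
    rw [mul_pow, mul_pow, sq_sqrt hΔ.le]; field_simp; ring
  calc _ ≤ (#{σ : V → Bool |
          4 * √G.maxDegree * log (Fintype.card V) ≤ |signSum (G.neighborFinset v) σ|} : ℝ) := by
        gcongr with σ; exact le_of_lt
    _ ≤ 2 * 2 ^ Fintype.card V * exp (-(8 * log (Fintype.card V) ^ 2)) := by
        rw [← hexp]; exact card_le_abs_signSum_le_exp_neg_sq _ hΔ hdeg ha
    _ < 2 ^ Fintype.card V / Fintype.card V := by
        have := mul_exp_neg_eight_mul_log_sq_lt hn2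
        rw [lt_div_iff₀ (by linarith)]
        nlinarith [pow_pos (two_pos : (0 : ℝ) < 2) (Fintype.card V)]

lemma exists_forall_abs_signSum_neighborFinset_le [Fintype V] [DecidableEq V]
    (G : SimpleGraph V) [DecidableRel G.Adj] (hn : 2 ≤ Fintype.card V) :
    ∃ σ : V → Bool, ∀ v,
      |signSum (G.neighborFinset v) σ| ≤ 4 * √G.maxDegree * log (Fintype.card V) := by
  have : Nonempty V := Fintype.card_pos_iff.mp (by omega)
  have hn0 : (0 : ℝ) < Fintype.card V := by exact_mod_cast Fintype.card_pos
  have hsum : ∑ v : V, #{σ : V → Bool |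
      4 * √G.maxDegree * log (Fintype.card V) < |signSum (G.neighborFinset v) σ|} <
        Fintype.card (V → Bool) := by
    have := sum_lt_sum_of_nonempty univ_nonempty fun v (_ : v ∈ univ) =>
      card_lt_abs_signSum_neighborFinset_lt G hn v
    rw [sum_const, card_univ, nsmul_eq_mul, mul_div_cancel₀ _ hn0.ne'] at this
    rw [Fintype.card_fun, Fintype.card_bool]
    exact_mod_cast this
  obtain ⟨σ, hσ⟩ := exists_forall_not_of_sum_card_filter_lt univ _ hsum
  exact ⟨σ, fun v => not_lt.mp (hσ v (mem_univ v))⟩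

/-- **Degree splitting by a vertex bipartition.** There is an absolute constant
`C > 0` such that every finite simple graph `G` on `n ≥ 2` vertices with
maximum degree `Δ` admits a partition of its vertex set into `L` and `R` such
that both the bipartite subgraph of cross edges (one endpoint in `L`, one in
`R`) and the complementary subgraph (both endpoints in `L` or both in `R`) have
maximum degree at most `Δ/2 + C·√Δ·log n`. -/
theorem exists_degree_splitting_partition :
    ∃ C : ℝ, 0 < C ∧
      ∀ (V : Type) [Fintype V] [DecidableEq V]
        (G : SimpleGraph V) [DecidableRel G.Adj],
        2 ≤ Fintype.card V →
        ∃ L R : Finset V, Disjoint L R ∧ L ∪ R = Finset.univ ∧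
          ∀ v : V,
            (((G.neighborFinset v).filter
                (fun w => (v ∈ L ∧ w ∈ R) ∨ (v ∈ R ∧ w ∈ L))).card : ℝ) ≤
              (G.maxDegree : ℝ) / 2 +
                C * Real.sqrt G.maxDegree * Real.log (Fintype.card V) ∧
            (((G.neighborFinset v).filter
                (fun w => (v ∈ L ∧ w ∈ L) ∨ (v ∈ R ∧ w ∈ R))).card : ℝ) ≤
              (G.maxDegree : ℝ) / 2 +
                C * Real.sqrt G.maxDegree * Real.log (Fintype.card V) := by
  refine ⟨2, two_pos, fun V _ _ G _ hn => ?_⟩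
  obtain ⟨σ, hσ⟩ := exists_forall_abs_signSum_neighborFinset_le G hn
  refine ⟨({v | σ v = true} : Finset V), ({v | ¬σ v = true} : Finset V),
    disjoint_filter_filter_not _ _ _, filter_union_filter_not_eq _ _, fun v => ?_⟩
  have hside (b : Bool) : (#{w ∈ G.neighborFinset v | σ w = b} : ℝ) ≤
      G.maxDegree / 2 + 2 * √G.maxDegree * log (Fintype.card V) := by
    have hdeg : (#(G.neighborFinset v) : ℝ) ≤ G.maxDegree := by
      exact_mod_cast (G.card_neighborFinset_eq_degree v).trans_le (G.degree_le_maxDegree v)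
    linarith [card_filter_eq_le_half_card_add_abs_signSum (G.neighborFinset v) σ b, hσ v]
  simp only [mem_filter, mem_univ, true_and]
  constructor
  · convert hside (!σ v) using 4 with w
    cases σ v <;> cases σ w <;> simp
  · convert hside (σ v) using 4 with w
    cases σ v <;> cases σ w <;> simp
end
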